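/- arXiv:2508.06019 — 5 statements merged into one kernel-verified Lean document; each statement's English description precedes it below -/
import Mathlib

section
/- Let f be a trigonometric polynomial of degree n with complex coefficients. Then the sum of all 2n complex roots of f lying in [0,2π) × iℝ (with multiplicity) belongs to 2πℤ if and only if, up to a nonzero constant factor, f has the form s₀ + Σ_{k=1}^{n-1}(s_k cos kα + s'_k sin kα) + cos nα, i.e., the coefficient of sin nα vanishes and the coefficient of cos nα can be normalized to 1. -/
open Polynomial Complex Finset

lemma trig_coeff_relations (N : ℕ) (hN : 1 ≤ N) (a b : ℕ → ℂ) (a0 : ℂ) (g : ℂ → ℂ)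
    (hg : ∀ z : ℂ, g z = a0 + ∑ k ∈ Finset.Icc 1 N, (a k * Complex.cos ((k : ℂ) * z) +
      b k * Complex.sin ((k : ℂ) * z)))
    (R : Multiset ℂ) (hcard : Multiset.card R = 2 * N) (c : ℂ)
    (hfact : ∀ z : ℂ, g z = c * Complex.exp (-(N : ℂ) * Complex.I * z) *
      (R.map (fun w => Complex.exp (Complex.I * z) - Complex.exp (Complex.I * w))).prod) :
    c = (a N - Complex.I * b N) / 2 ∧
      c * Complex.exp (Complex.I * R.sum) = (a N + Complex.I * b N) / 2 := by
  set P : ℂ[X] := C a0 * X ^ N + ∑ k ∈ Finset.Icc 1 N,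
      (C ((a k - Complex.I * b k) / 2) * X ^ (N + k) +
       C ((a k + Complex.I * b k) / 2) * X ^ (N - k)) with hPdef
  set M : ℂ[X] := (R.map (fun w => X - C (Complex.exp (Complex.I * w)))).prod with hMdef
  set Q : ℂ[X] := C c * M with hQdef
  have heval : ∀ z : ℂ, P.eval (Complex.exp (Complex.I * z)) = Q.eval (Complex.exp (Complex.I * z)) := by
    intro z
    set q : ℂ := Complex.exp (Complex.I * z) with hq_def
    have hq : q ≠ 0 := Complex.exp_ne_zero _
    have hP : P.eval q = q ^ N * g z := by
      rw [hg z, mul_add, Finset.mul_sum, hPdef]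
      simp only [eval_add, eval_mul, eval_pow, eval_C, eval_X, eval_finset_sum]
      congr 1
      · ring
      · refine Finset.sum_congr rfl fun k hk => ?_
        have hkN : k ≤ N := (Finset.mem_Icc.mp hk).2
        have hpow : Complex.exp (((k : ℂ) * z) * Complex.I) = q ^ k := by
          rw [hq_def, ← Complex.exp_nat_mul]
          congr 1; ring
        have hpow' : Complex.exp (-((k : ℂ) * z) * Complex.I) = (q ^ k)⁻¹ := by
          rw [neg_mul, Complex.exp_neg, hpow]
        have hcos : Complex.cos ((k : ℂ) * z) = (q ^ k + (q ^ k)⁻¹) / 2 := by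
          have h := Complex.two_cos ((k : ℂ) * z)
          rw [hpow, hpow'] at h
          linear_combination h / 2
        have hsin : Complex.sin ((k : ℂ) * z) = ((q ^ k)⁻¹ - q ^ k) * Complex.I / 2 := by
          have h := Complex.two_sin ((k : ℂ) * z)
          rw [hpow, hpow'] at h
          linear_combination h / 2
        rw [hcos, hsin, pow_add, pow_sub₀ q hq hkN]
        have hu : q ^ k ≠ 0 := pow_ne_zero _ hq
        field_simp
        ring
    have hQ : Q.eval q = q ^ N * g z := by
      rw [hfact z, hQdef, hMdef]
      simp only [eval_mul, eval_C, eval_multiset_prod, Multiset.map_map, Function.comp,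
        eval_sub, eval_X, ← hq_def]
      have hexp : Complex.exp (-(N : ℂ) * Complex.I * z) = (q ^ N)⁻¹ := by
        rw [show (-(N : ℂ) * Complex.I * z) = -((N : ℂ) * (Complex.I * z)) by ring,
          Complex.exp_neg, hq_def, ← Complex.exp_nat_mul]
      rw [hexp]
      have hqN : q ^ N ≠ 0 := pow_ne_zero _ hq
      field_simp
    rw [hP, hQ]
  have hPQ : P = Q := by
    have hz : P - Q = 0 := by
      apply Polynomial.eq_zero_of_infinite_isRoot
      apply Set.Infinite.mono (s := {x : ℂ | x ≠ 0})
      · intro q hq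
        have hq' : (q : ℂ) ≠ 0 := hq
        have : Complex.exp (Complex.I * (-Complex.I * Complex.log q)) = q := by
          rw [show Complex.I * (-Complex.I * Complex.log q)
              = -(Complex.I * Complex.I) * Complex.log q by ring, Complex.I_mul_I]
          simp [Complex.exp_log hq']
        have h := heval (-Complex.I * Complex.log q)
        rw [this] at h
        simp [Polynomial.IsRoot, h]
      · exact Set.Finite.infinite_compl (Set.finite_singleton 0)
    have := sub_eq_zero.mp hz
    exact this
  have hMmonic : M.Monic :=
    monic_multiset_prod_of_monic R _ (fun w _ => monic_X_sub_C _)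
  have hMdeg : M.natDegree = 2 * N := by
    rw [hMdef, natDegree_multiset_prod_of_monic _ (fun p hp => by
      obtain ⟨w, _, rfl⟩ := Multiset.mem_map.mp hp
      exact monic_X_sub_C _)]
    simp [Multiset.map_map, Function.comp, natDegree_X_sub_C, Multiset.map_const',
      Multiset.sum_replicate, hcard]
  have hQtop : Q.coeff (2 * N) = c := by
    rw [hQdef, coeff_C_mul, ← hMdeg, hMmonic.coeff_natDegree, mul_one]
  have hQ0 : Q.coeff 0 = c * Complex.exp (Complex.I * R.sum) := by
    rw [Polynomial.coeff_zero_eq_eval_zero, hQdef, hMdef]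
    simp only [eval_mul, eval_C, eval_multiset_prod, Multiset.map_map, Function.comp,
      eval_sub, eval_X, zero_sub]
    have h1 : (R.map fun w => -Complex.exp (Complex.I * w)).prod
        = (-1) ^ (Multiset.card R) * (R.map fun w => Complex.exp (Complex.I * w)).prod := by
      have h := Multiset.prod_map_neg (R.map fun w => Complex.exp (Complex.I * w))
      rw [Multiset.map_map] at h
      simpa using h
    have h2 : (R.map fun w => Complex.exp (Complex.I * w)).prod
        = Complex.exp (Complex.I * R.sum) := by
      rw [show Complex.I * R.sum = (R.map fun w => Complex.I * w).sum by
        rw [Multiset.sum_map_mul_left]; simp, Complex.exp_multiset_sum, Multiset.map_map]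
      rfl
    rw [h1, h2, hcard]
    simp [pow_mul]
  have hPtop : P.coeff (2 * N) = (a N - Complex.I * b N) / 2 := by
    rw [hPdef]
    simp only [coeff_add, coeff_C_mul, coeff_X_pow, finset_sum_coeff]
    rw [if_neg (by omega)]
    rw [Finset.sum_eq_single_of_mem N (Finset.mem_Icc.mpr ⟨hN, le_refl N⟩)]
    · rw [if_pos (by omega), if_neg (by omega)]
      ring
    · intro k hk hkN
      have h1 := (Finset.mem_Icc.mp hk).1
      have h2 := (Finset.mem_Icc.mp hk).2
      rw [if_neg (by omega), if_neg (by omega)]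
      ring
  have hP0 : P.coeff 0 = (a N + Complex.I * b N) / 2 := by
    rw [hPdef]
    simp only [coeff_add, coeff_C_mul, coeff_X_pow, finset_sum_coeff]
    rw [if_neg (by omega)]
    rw [Finset.sum_eq_single_of_mem N (Finset.mem_Icc.mpr ⟨hN, le_refl N⟩)]
    · rw [if_neg (by omega), if_pos (by omega)]
      ring
    · intro k hk hkN
      have h1 := (Finset.mem_Icc.mp hk).1
      have h2 := (Finset.mem_Icc.mp hk).2
      rw [if_neg (by omega), if_neg (by omega)]
      ring
  constructor
  · rw [← hPtop, hPQ, hQtop]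
  · rw [← hP0, hPQ, hQ0]


/-- Let `f` be a trigonometric polynomial of degree `n` with complex
coefficients, with roots in the strip `[0,2π) × iℝ` recorded (with multiplicity) by a
multiset `R` of cardinality `2n` through the factorization
`f(z) = c · e^{-inz} · ∏_{w ∈ R} (e^{iz} - e^{iw})`.  Then the sum of the roots belongs
to `2πℤ` if and only if, up to a nonzero constant factor, `f` has the form
`s₀ + ∑_{k=1}^{n-1} (s_k cos kα + s'_k sin kα) + cos nα`. -/
theorem trig_poly_root_sum_iff_normalized (n : ℕ) (hn : 1 ≤ n) (s s' : ℕ → ℂ)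
    (hlead : (s n, s' n) ≠ (0, 0)) (f : ℂ → ℂ)
    (hf : ∀ z : ℂ, f z =
      s 0 + ∑ k ∈ Finset.Icc 1 n, (s k * Complex.cos ((k : ℂ) * z) +
        s' k * Complex.sin ((k : ℂ) * z)))
    (R : Multiset ℂ) (hcard : Multiset.card R = 2 * n)
    (hstrip : ∀ w ∈ R, w.re ∈ Set.Ico 0 (2 * Real.pi))
    (c : ℂ) (hc : c ≠ 0)
    (hfact : ∀ z : ℂ, f z = c * Complex.exp (-(n : ℂ) * Complex.I * z) *
      (R.map (fun w => Complex.exp (Complex.I * z) - Complex.exp (Complex.I * w))).prod) :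
    (∃ m : ℤ, R.sum = ((2 * Real.pi * (m : ℝ) : ℝ) : ℂ)) ↔
    (∃ d : ℂ, d ≠ 0 ∧ ∃ t t' : ℕ → ℂ, ∀ z : ℂ,
      f z = d * (t 0 + ∑ k ∈ Finset.Icc 1 (n - 1), (t k * Complex.cos ((k : ℂ) * z) +
        t' k * Complex.sin ((k : ℂ) * z)) + Complex.cos ((n : ℂ) * z))) := by
  have hsplit : Finset.Icc 1 n = insert n (Finset.Icc 1 (n - 1)) := by
    ext x; simp only [Finset.mem_Icc, Finset.mem_insert]; omega
  have hnotmem : n ∉ Finset.Icc 1 (n - 1) := by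
    simp only [Finset.mem_Icc]; omega
  constructor
  · rintro ⟨m, hm⟩
    obtain ⟨hc1, hc2⟩ := trig_coeff_relations n hn s s' (s 0) f hf R hcard c hfact
    have hE : Complex.exp (Complex.I * R.sum) = 1 := by
      rw [hm]
      push_cast
      rw [show Complex.I * (2 * (Real.pi : ℂ) * (m : ℂ)) = (m : ℂ) * (2 * (Real.pi : ℂ) * Complex.I) by ring]
      exact Complex.exp_int_mul_two_pi_mul_I m
    rw [hE, mul_one] at hc2
    have h3 : Complex.I * s' n = 0 := by linear_combination hc1 - hc2
    have hs' : s' n = 0 := by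
      rcases mul_eq_zero.mp h3 with h | h
      · exact absurd h Complex.I_ne_zero
      · exact h
    have hsn : s n ≠ 0 := by
      intro h0
      exact hlead (by rw [h0, hs'])
    refine ⟨s n, hsn, fun k => s k / s n, fun k => s' k / s n, fun z => ?_⟩
    rw [hf z, hsplit, Finset.sum_insert hnotmem, hs']
    have hterm : ∀ k ∈ Finset.Icc 1 (n - 1),
        s k / s n * Complex.cos ((k : ℂ) * z) + s' k / s n * Complex.sin ((k : ℂ) * z)
        = (s k * Complex.cos ((k : ℂ) * z) + s' k * Complex.sin ((k : ℂ) * z)) / s n := by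
      intro k _; field_simp
    rw [Finset.sum_congr rfl hterm, ← Finset.sum_div]
    field_simp
    ring
  · rintro ⟨d, hd, t, t', hft⟩
    set A : ℕ → ℂ := fun k => if k = n then d else d * t k with hA
    set B : ℕ → ℂ := fun k => if k = n then 0 else d * t' k with hB
    have hg' : ∀ z : ℂ, f z = d * t 0 + ∑ k ∈ Finset.Icc 1 n,
        (A k * Complex.cos ((k : ℂ) * z) + B k * Complex.sin ((k : ℂ) * z)) := by
      intro z
      rw [hft z, hsplit, Finset.sum_insert hnotmem]
      have hterm : ∀ k ∈ Finset.Icc 1 (n - 1),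
          A k * Complex.cos ((k : ℂ) * z) + B k * Complex.sin ((k : ℂ) * z)
          = d * (t k * Complex.cos ((k : ℂ) * z) + t' k * Complex.sin ((k : ℂ) * z)) := by
        intro k hk
        have hkn : k ≠ n := by
          have := Finset.mem_Icc.mp hk; omega
        simp only [hA, hB, if_neg hkn]; ring
      rw [Finset.sum_congr rfl hterm, ← Finset.mul_sum]
      simp only [hA, hB, if_pos rfl]
      ring
    obtain ⟨k1, k2⟩ := trig_coeff_relations n hn A B (d * t 0) f hg' R hcard c hfact
    simp only [hA, hB, if_pos rfl, mul_zero, sub_zero, add_zero] at k1 k2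
    have hE : Complex.exp (Complex.I * R.sum) = 1 := by
      have : c * Complex.exp (Complex.I * R.sum) = c * 1 := by rw [mul_one, k2, k1]
      exact mul_left_cancel₀ hc this
    obtain ⟨m, hm⟩ := Complex.exp_eq_one_iff.mp hE
    refine ⟨m, ?_⟩
    have h2 : Complex.I * R.sum = Complex.I * ((2 * Real.pi * (m : ℝ) : ℝ) : ℂ) := by
      rw [hm]; push_cast; ring
    exact mul_left_cancel₀ Complex.I_ne_zero h2
end

section
/- Let I_id : 𝔽₂^g × 𝔽₂^g → 𝔽₂ be the standard bilinear form I_id(u,v) = Σ u_i v_i. Define Gr^g[1, g−1] as the set of pairs (A₁, A₂) of subspaces of 𝔽₂^g such that the rank of the restriction of I_id to A₁ × A₂ lies in [1, g−1], ordered componentwise by inclusion. Then the maximum length of a chain in Gr^g[1, g−1] is 2g−3 (i.e., the longest chains have 2g−2 terms), for g ≥ 2. -/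
/-- The standard bilinear form `I_id(u,v) = ∑ uᵢvᵢ` on `𝔽₂^g`. -/
noncomputable def stdBilinForm (g : ℕ) :
    (Fin g → ZMod 2) →ₗ[ZMod 2] (Fin g → ZMod 2) →ₗ[ZMod 2] ZMod 2 :=
  Matrix.toBilin' (1 : Matrix (Fin g) (Fin g) (ZMod 2))

/-- The rank of the restriction of `I_id` to `A₁ × A₂`, i.e. the rank of the induced
linear map `A₁ → Hom(A₂, 𝔽₂)`. -/
noncomputable def restrRank (g : ℕ)
    (A₁ A₂ : Submodule (ZMod 2) (Fin g → ZMod 2)) : ℕ :=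
  Module.finrank (ZMod 2)
    (LinearMap.range (LinearMap.domRestrict₁₂ (stdBilinForm g) A₁ A₂))

/-- `Gr^g[1, g−1]`: pairs of subspaces of `𝔽₂^g` with `1 ≤ rank(I_id|_{A₁×A₂}) ≤ g−1`,
ordered componentwise by inclusion. -/
def GrInterval (g : ℕ) : Type :=
  {p : Submodule (ZMod 2) (Fin g → ZMod 2) × Submodule (ZMod 2) (Fin g → ZMod 2) //
    1 ≤ restrRank g p.1 p.2 ∧ restrRank g p.1 p.2 ≤ g - 1}

instance (g : ℕ) : PartialOrder (GrInterval g) :=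
  Subtype.partialOrder _

namespace GrAux

variable (g : ℕ)

lemma stdBilinForm_apply (u v : Fin g → ZMod 2) :
    stdBilinForm g u v = dotProduct u v := by
  simp [stdBilinForm, Matrix.toBilin'_apply', Matrix.one_mulVec]

def S (i : ℕ) : Submodule (ZMod 2) (Fin g → ZMod 2) where
  carrier := {v | ∀ j : Fin g, i ≤ (j : ℕ) → v j = 0}
  add_mem' := by intro a b ha hb j hj; simp [ha j hj, hb j hj]
  zero_mem' := by intro j hj; rfl
  smul_mem' := by intro c a ha j hj; simp [ha j hj]

lemma mem_S {i : ℕ} {v : Fin g → ZMod 2} :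
    v ∈ S g i ↔ ∀ j : Fin g, i ≤ (j : ℕ) → v j = 0 := Iff.rfl

lemma single_mem_S {i : ℕ} {j : Fin g} (h : (j : ℕ) < i) :
    Pi.single j (1 : ZMod 2) ∈ S g i := by
  intro k hk
  have : k ≠ j := by intro hkj; subst hkj; omega
  simp [Pi.single_eq_of_ne this]

lemma S_le_S {a b : ℕ} (h : a ≤ b) : S g a ≤ S g b := by
  intro v hv j hj
  exact hv j (le_trans h hj)

lemma S_lt_S {a b : ℕ} (h : a < b) (hb : b ≤ g) : S g a < S g b := by
  refine lt_of_le_of_ne (S_le_S g h.le) ?_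
  intro he
  have hj : a < g := lt_of_lt_of_le h hb
  have h1 : Pi.single (⟨a, hj⟩ : Fin g) (1 : ZMod 2) ∈ S g b :=
    single_mem_S g (by simp [h])
  rw [← he] at h1
  have := h1 ⟨a, hj⟩ (by simp)
  simp at this

def SEquiv {i : ℕ} (h : i ≤ g) : (S g i) ≃ₗ[ZMod 2] (Fin i → ZMod 2) where
  toFun v := fun j => v.1 (Fin.castLE h j)
  invFun w := ⟨fun j => if hj : (j : ℕ) < i then w ⟨j, hj⟩ else 0, by
    intro j hj
    simp [Nat.not_lt.2 hj]⟩
  map_add' a b := rfl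
  map_smul' c a := rfl
  left_inv v := by
    ext j
    by_cases hj : (j : ℕ) < i
    · simp only [hj, dif_pos]
      congr 1
    · simp only [hj, dif_neg]
      exact (v.2 j (Nat.not_lt.1 hj)).symm
  right_inv w := by
    ext j
    simp [Fin.castLE]

lemma finrank_S {i : ℕ} (h : i ≤ g) :
    Module.finrank (ZMod 2) (S g i) = i := by
  rw [LinearEquiv.finrank_eq (SEquiv g h)]
  simp

lemma ker_eq_bot {a b : ℕ} (hab : a ≤ b) :
    LinearMap.ker (LinearMap.domRestrict₁₂ (stdBilinForm g) (S g a) (S g b)) = ⊥ := by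
  rw [LinearMap.ker_eq_bot']
  intro x hx
  ext j
  by_cases hj : (j : ℕ) < a
  · have hy : Pi.single j (1 : ZMod 2) ∈ S g b := single_mem_S g (lt_of_lt_of_le hj hab)
    have := congrArg (fun f => f ⟨Pi.single j (1 : ZMod 2), hy⟩) hx
    simp only [LinearMap.domRestrict₁₂_apply, LinearMap.zero_apply] at this
    rw [stdBilinForm_apply, dotProduct_single] at this
    simpa using this
  · exact x.2 j (Nat.not_lt.1 hj)

lemma restrRank_S {a b : ℕ} (hab : a ≤ b) (hb : b ≤ g) :
    restrRank g (S g a) (S g b) = a := by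
  have h := LinearMap.finrank_range_add_finrank_ker
    (LinearMap.domRestrict₁₂ (stdBilinForm g) (S g a) (S g b))
  rw [ker_eq_bot g hab, finrank_bot, finrank_S g (le_trans hab hb)] at h
  simpa [restrRank] using h

lemma S_top : S g g = ⊤ := by
  rw [eq_top_iff]
  intro v _ j hj
  exact absurd j.2 (Nat.not_lt.2 hj)

lemma restrRank_top : restrRank g ⊤ ⊤ = g := by
  rw [← S_top g]; exact restrRank_S g le_rfl le_rfl

lemma restrRank_le_left (A₁ A₂ : Submodule (ZMod 2) (Fin g → ZMod 2)) :
    restrRank g A₁ A₂ ≤ Module.finrank (ZMod 2) A₁ :=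
  LinearMap.finrank_range_le _

lemma restrRank_le_right (A₁ A₂ : Submodule (ZMod 2) (Fin g → ZMod 2)) :
    restrRank g A₁ A₂ ≤ Module.finrank (ZMod 2) A₂ := by
  have h1 : restrRank g A₁ A₂ ≤
      Module.finrank (ZMod 2) (A₂ →ₗ[ZMod 2] ZMod 2) :=
    Submodule.finrank_le _
  have h2 : Module.finrank (ZMod 2) (Module.Dual (ZMod 2) A₂) =
      Module.finrank (ZMod 2) A₂ := Subspace.dual_finrank_eq
  exact h1.trans (le_of_eq h2)

end GrAux

/-- For `g ≥ 2`, the maximum length of a chain in `Gr^g[1, g−1]` is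
`2g − 3`; that is, every strictly increasing chain `c₀ < c₁ < ... < c_k` has
`k ≤ 2g − 3`, and a chain of length `2g − 3` (with `2g − 2` terms) exists. -/
theorem grInterval_chain_length (g : ℕ) (hg : 2 ≤ g) :
    (∀ (k : ℕ) (c : Fin (k + 1) → GrInterval g), StrictMono c → k ≤ 2 * g - 3) ∧
    (∃ c : Fin (2 * g - 3 + 1) → GrInterval g, StrictMono c) := by
  have hfin : Module.finrank (ZMod 2) (Fin g → ZMod 2) = g := by simp
  constructor
  · intro k c hc
    set f : GrInterval g → ℕ := fun p =>
      Module.finrank (ZMod 2) p.1.1 + Module.finrank (ZMod 2) p.1.2 with hf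
    have hmono : ∀ p q : GrInterval g, p < q → f p < f q := by
      intro p q hpq
      obtain ⟨hle, hne⟩ := lt_iff_le_and_ne.1 hpq
      have h1 : p.1.1 ≤ q.1.1 := hle.1
      have h2 : p.1.2 ≤ q.1.2 := hle.2
      have hvne : p.1 ≠ q.1 := fun h => hne (Subtype.ext h)
      have hcases : p.1.1 ≠ q.1.1 ∨ p.1.2 ≠ q.1.2 := by
        by_contra hcon
        push_neg at hcon
        exact hvne (Prod.ext hcon.1 hcon.2)
      rcases hcases with h | h
      · have := Submodule.finrank_lt_finrank_of_lt (lt_of_le_of_ne h1 h)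
        have := Submodule.finrank_mono h2
        simp only [hf]
        omega
      · have := Submodule.finrank_lt_finrank_of_lt (lt_of_le_of_ne h2 h)
        have := Submodule.finrank_mono h1
        simp only [hf]
        omega
    have hlow : ∀ p : GrInterval g, 2 ≤ f p := by
      intro p
      have h1 := (GrAux.restrRank_le_left g p.1.1 p.1.2)
      have h2 := (GrAux.restrRank_le_right g p.1.1 p.1.2)
      have h3 := p.2.1
      simp only [hf]
      omega
    have hhigh : ∀ p : GrInterval g, f p ≤ 2 * g - 1 := by
      intro p
      have ha : Module.finrank (ZMod 2) p.1.1 ≤ g := le_of_le_of_eq (Submodule.finrank_le _) hfin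
      have hb : Module.finrank (ZMod 2) p.1.2 ≤ g := le_of_le_of_eq (Submodule.finrank_le _) hfin
      have hne : ¬(Module.finrank (ZMod 2) p.1.1 = g ∧
          Module.finrank (ZMod 2) p.1.2 = g) := by
        rintro ⟨e1, e2⟩
        have t1 : p.1.1 = ⊤ := Submodule.eq_top_of_finrank_eq (by rw [e1, hfin])
        have t2 : p.1.2 = ⊤ := Submodule.eq_top_of_finrank_eq (by rw [e2, hfin])
        have := p.2.2
        rw [t1, t2, GrAux.restrRank_top] at this
        omega
      simp only [hf]
      omega
    have key : ∀ i : ℕ, ∀ hi : i < k + 1, f (c 0) + i ≤ f (c ⟨i, hi⟩) := by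
      intro i
      induction i with
      | zero => intro hi; simp [show (⟨0, hi⟩ : Fin (k+1)) = 0 from rfl]
      | succ n ih =>
        intro hi
        have h1 := ih (by omega)
        have h2 : c ⟨n, by omega⟩ < c ⟨n + 1, hi⟩ := hc (by simp [Fin.lt_def])
        have h3 := hmono _ _ h2
        omega
    have h1 := key k (by omega)
    have h2 := hlow (c 0)
    have h3 := hhigh (c ⟨k, by omega⟩)
    omega
  · refine ⟨fun i => ⟨(GrAux.S g ((i : ℕ) / 2 + 1), GrAux.S g (((i : ℕ) + 1) / 2 + 1)),
      ?_, ?_⟩, ?_⟩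
    · have hi : (i : ℕ) ≤ 2 * g - 3 := by omega
      rw [GrAux.restrRank_S g (by omega) (by omega)]
      omega
    · have hi : (i : ℕ) ≤ 2 * g - 3 := by omega
      rw [GrAux.restrRank_S g (by omega) (by omega)]
      omega
    · intro i j hij
      have hi : (i : ℕ) ≤ 2 * g - 3 := by omega
      have hj : (j : ℕ) ≤ 2 * g - 3 := by omega
      have hij' : (i : ℕ) < (j : ℕ) := hij
      show (GrAux.S g ((i : ℕ) / 2 + 1), GrAux.S g (((i : ℕ) + 1) / 2 + 1)) <
        (GrAux.S g ((j : ℕ) / 2 + 1), GrAux.S g (((j : ℕ) + 1) / 2 + 1))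
      rw [Prod.lt_iff]
      by_cases h : (i : ℕ) / 2 < (j : ℕ) / 2
      · exact Or.inl ⟨GrAux.S_lt_S g (by omega) (by omega), GrAux.S_le_S g (by omega)⟩
      · exact Or.inr ⟨GrAux.S_le_S g (by omega), GrAux.S_lt_S g (by omega) (by omega)⟩
end

section
/- The n-fold symmetric product Sym^n(S¹) of the circle S¹ = ℝ/2πℤ is homeomorphic to the mapping torus structure of a closed (n−1)-simplex over S¹; in particular, the fiber Sym^n_0(S¹) of the sum map over 0 (configurations whose n members sum to an element of 2πℤ) is homeomorphic to a closed (n−1)-simplex. -/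
open scoped Real

/-- The circle `ℝ/2πℤ`. -/
abbrev Circ : Type := AddCircle (2 * Real.pi)

/-- The setoid on `Fin n → X` identifying tuples up to permutation of the indices. -/
def symSetoid (X : Type*) (n : ℕ) : Setoid (Fin n → X) where
  r f g := ∃ σ : Equiv.Perm (Fin n), f ∘ σ = g
  iseqv := by
    refine ⟨fun f => ⟨Equiv.refl _, rfl⟩, ?_, ?_⟩
    · rintro f g ⟨σ, rfl⟩
      exact ⟨σ.symm, by ext i; simp⟩
    · rintro f g h ⟨σ, rfl⟩ ⟨τ, rfl⟩
      exact ⟨τ.trans σ, by ext i; simp⟩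

/-- The `n`-fold symmetric product `Sym^n(X) = Xⁿ/Sₙ`, with the quotient topology. -/
abbrev SymProd (X : Type*) (n : ℕ) : Type _ := Quotient (symSetoid X n)

/-- The sum map `Sym^n(S¹) → S¹`, sending an unordered `n`-tuple to the sum of its
members (mod `2π`). -/
noncomputable def symSum (n : ℕ) : SymProd Circ n → Circ :=
  Quotient.lift (fun f : Fin n → Circ => ∑ i, f i) (by
    rintro f g ⟨σ, rfl⟩
    simpa using (Equiv.sum_comp σ f).symm)

/-- The mapping torus of a self-homeomorphism `φ` of `X`: the quotient of `X × ℝ` by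
`(x, t) ∼ (φ x, t + 1)`. -/
def MappingTorus {X : Type*} [TopologicalSpace X] (φ : X ≃ₜ X) : Type _ :=
  Quot (fun p q : X × ℝ => q = (φ p.1, p.2 + 1))

instance {X : Type*} [TopologicalSpace X] (φ : X ≃ₜ X) :
    TopologicalSpace (MappingTorus φ) :=
  inferInstanceAs (TopologicalSpace (Quot (fun p q : X × ℝ => q = (φ p.1, p.2 + 1))))
namespace SymAux
open Fin.NatCast
instance : Fact (0 < 2 * Real.pi) := ⟨by positivity⟩

variable {n : ℕ}

/-- cyclic shift permutation -/
def cshift (n : ℕ) [NeZero n] : Equiv.Perm (Fin n) := Equiv.addRight 1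

def SS [NeZero n] (r : Fin n → ℝ) (k : ℕ) : ℝ := ∑ i ∈ Finset.range k, r i

def BB [NeZero n] (r : Fin n → ℝ) : ℝ := ∑ k ∈ Finset.range n, SS r k

noncomputable def XC [NeZero n] (r : Fin n → ℝ) (t : ℝ) (k : Fin n) : ℝ :=
  2 * Real.pi * (t / n + SS r k - BB r / n)

noncomputable def Phi [NeZero n] (r : Fin n → ℝ) (t : ℝ) : Fin n → Circ :=
  fun k => (XC r t k : ℝ)

variable [NeZero n]

@[simp] lemma SS_zero (r : Fin n → ℝ) : SS r 0 = 0 := by simp [SS]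

lemma SS_succ (r : Fin n → ℝ) (k : ℕ) : SS r (k+1) = SS r k + r k := by
  simp [SS, Finset.sum_range_succ]

lemma SS_univ (r : Fin n → ℝ) : SS r n = ∑ i, r i := by
  rw [SS, ← Fin.sum_univ_eq_sum_range (fun i => r i) n]
  exact Finset.sum_congr rfl fun i _ => by rw [Fin.cast_val_eq_self]

lemma SS_mono {r : Fin n → ℝ} (hr : ∀ i, 0 ≤ r i) : Monotone (SS r) := by
  intro j k hjk
  exact Finset.sum_le_sum_of_subset_of_nonneg (Finset.range_subset_range.2 hjk)
    (fun i _ _ => hr _)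

lemma SS_nonneg {r : Fin n → ℝ} (hr : ∀ i, 0 ≤ r i) (k : ℕ) : 0 ≤ SS r k := by
  simpa using SS_mono hr (Nat.zero_le k)

lemma sum_SS (r : Fin n → ℝ) : ∑ k : Fin n, SS r (k : ℕ) = BB r :=
  Fin.sum_univ_eq_sum_range (fun j => SS r j) n

lemma SS_shift (r : Fin n → ℝ) (k : ℕ) :
    SS (r ∘ cshift n) k = SS r (k+1) - r 0 := by
  induction k with
  | zero => simp [SS_succ]
  | succ k ih =>
      rw [SS_succ, ih, SS_succ (k := k+1)]
      have : (r ∘ cshift n) (k : Fin n) = r ((k:ℕ)+1 : ℕ) := by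
        simp [cshift, Equiv.addRight]
      rw [this]; ring

lemma BB_shift (r : Fin n → ℝ) :
    BB (r ∘ cshift n) = BB r + SS r n - n * r 0 := by
  have h1 : BB (r ∘ cshift n) = ∑ k ∈ Finset.range n, (SS r (k+1) - r 0) := by
    rw [BB]; exact Finset.sum_congr rfl fun k _ => SS_shift r k
  rw [h1, Finset.sum_sub_distrib]
  have h2 : ∑ k ∈ Finset.range n, SS r (k+1) = BB r + SS r n - SS r 0 := by
    have := Finset.sum_range_succ' (fun k => SS r k) n
    rw [Finset.sum_range_succ (fun k => SS r k) n] at this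
    rw [BB]
    linarith [this]
  rw [h2]
  simp

lemma sum_XC (r : Fin n → ℝ) (t : ℝ) : ∑ k, XC r t k = 2 * Real.pi * t := by
  have hn : (n:ℝ) ≠ 0 := Nat.cast_ne_zero.2 (NeZero.ne n)
  unfold XC
  rw [← Finset.mul_sum]
  rw [Finset.sum_sub_distrib, Finset.sum_add_distrib, sum_SS]
  simp [Finset.sum_const, Finset.card_univ]
  field_simp
  ring

lemma XC_shift_val (r : Fin n → ℝ) (hr1 : ∑ i, r i = 1) (t : ℝ) (k : Fin n) :
    XC (r ∘ cshift n) (t+1) k = 2 * Real.pi * (t / n + SS r ((k:ℕ)+1) - BB r / n) := by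
  have hn : (n:ℝ) ≠ 0 := Nat.cast_ne_zero.2 (NeZero.ne n)
  unfold XC
  rw [SS_shift, BB_shift, SS_univ, hr1]
  field_simp
  ring

lemma Phi_shift (r : Fin n → ℝ) (hr1 : ∑ i, r i = 1) (t : ℝ) :
    Phi (r ∘ cshift n) (t+1) = (Phi r t) ∘ (cshift n) := by
  funext k
  show ((XC (r ∘ cshift n) (t+1) k : ℝ) : Circ) = ((XC r t (cshift n k) : ℝ) : Circ)
  rw [XC_shift_val r hr1]
  have hck : cshift n k = k + 1 := rfl
  rcases lt_or_ge ((k:ℕ)+1) n with h | h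
  · have h1n : (1:ℕ) % n = 1 := Nat.mod_eq_of_lt (by omega)
    have hv : ((k + 1 : Fin n) : ℕ) = (k:ℕ)+1 := by
      rw [Fin.val_add, Fin.val_one', h1n, Nat.mod_eq_of_lt h]
    rw [hck]
    have hx : XC r t (k+1) = 2*Real.pi*(t/(n:ℝ) + SS r ((k:ℕ)+1) - BB r/(n:ℝ)) := by
      unfold XC; rw [hv]
    rw [hx]
  · have hkn : (k:ℕ)+1 = n := le_antisymm (Nat.succ_le_of_lt k.isLt) h
    have h0 : (k + 1 : Fin n) = 0 := by
      apply Fin.ext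
      rw [Fin.val_add, Fin.val_one']
      rcases Nat.lt_or_ge 1 n with h1 | h1
      · rw [Nat.mod_eq_of_lt h1, hkn, Nat.mod_self, Fin.val_zero]
      · interval_cases n
        · exact absurd rfl (NeZero.ne 0)
        · omega
    rw [hck, h0]
    have hx : XC r t 0 = 2*Real.pi*(t/(n:ℝ) + SS r 0 - BB r/(n:ℝ)) := by
      unfold XC
      norm_num
    rw [hx, hkn, SS_univ, hr1, SS_zero]
    have he : (2*Real.pi*(t/(n:ℝ) + 1 - BB r/(n:ℝ)))
        = 2*Real.pi*(t/(n:ℝ) + 0 - BB r/(n:ℝ)) + 2*Real.pi := by ring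
    rw [he, AddCircle.coe_add_period]

lemma quot_shift (r : Fin n → ℝ) (hr1 : ∑ i, r i = 1) (t : ℝ) :
    (⟦Phi r t⟧ : SymProd Circ n) = ⟦Phi (r ∘ cshift n) (t+1)⟧ :=
  Quotient.sound ⟨cshift n, (Phi_shift r hr1 t).symm⟩

omit [NeZero n] in
lemma comp_perm_sum (r : Fin n → ℝ) (σ : Equiv.Perm (Fin n)) (hr1 : ∑ i, r i = 1) :
    ∑ i, (r ∘ σ) i = 1 := by
  simpa [Function.comp] using (Equiv.sum_comp σ r).trans hr1

lemma quot_shift_z (r : Fin n → ℝ) (hr1 : ∑ i, r i = 1) (t : ℝ) (j : ℤ) :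
    (⟦Phi r t⟧ : SymProd Circ n) = ⟦Phi (r ∘ (cshift n ^ j : Equiv.Perm (Fin n))) (t + j)⟧ := by
  induction j using Int.induction_on with
  | zero => simp
  | succ j ih =>
      have step := quot_shift (r ∘ (cshift n ^ (j:ℤ) : Equiv.Perm (Fin n)))
        (comp_perm_sum r _ hr1) (t + ((j:ℤ):ℝ))
      have hA : (r ∘ (cshift n ^ (j:ℤ) : Equiv.Perm (Fin n))) ∘ (cshift n)
          = r ∘ (cshift n ^ ((j:ℤ)+1) : Equiv.Perm (Fin n)) := by
        funext x
        simp [zpow_add_one, Equiv.Perm.mul_apply]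
      rw [hA] at step
      have h2 : t + ((j:ℤ):ℝ) + 1 = t + (((j:ℤ)+1 : ℤ):ℝ) := by push_cast; ring
      rw [h2] at step
      exact ih.trans step
  | pred j ih =>
      have step := quot_shift (r ∘ (cshift n ^ (-(j:ℤ)-1) : Equiv.Perm (Fin n)))
        (comp_perm_sum r _ hr1) (t + ((-(j:ℤ)-1 : ℤ):ℝ))
      have hmul : (cshift n ^ (-(j:ℤ)-1) : Equiv.Perm (Fin n)) * cshift n
          = (cshift n ^ (-(j:ℤ)) : Equiv.Perm (Fin n)) := by
        rw [← zpow_add_one]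
        norm_num
      have hA : (r ∘ (cshift n ^ (-(j:ℤ)-1) : Equiv.Perm (Fin n))) ∘ (cshift n)
          = r ∘ (cshift n ^ (-(j:ℤ)) : Equiv.Perm (Fin n)) := by
        funext x
        rw [← hmul]
        simp [Equiv.Perm.mul_apply]
      rw [hA] at step
      have h2 : t + ((-(j:ℤ)-1 : ℤ):ℝ) + 1 = t + ((-(j:ℤ) : ℤ):ℝ) := by push_cast; ring
      rw [h2] at step
      rw [← ih] at step
      exact step.symm

lemma exists_rep (f : Fin n → Circ) :
    ∃ r : Fin n → ℝ, ∃ t : ℝ, r ∈ stdSimplex ℝ (Fin n) ∧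
      (⟦f⟧ : SymProd Circ n) = ⟦Phi r t⟧ := by
  classical
  have hppos : (0:ℝ) < 2 * Real.pi := by positivity
  have hpne : (2 * Real.pi : ℝ) ≠ 0 := ne_of_gt hppos
  have hn0 : 0 < n := Nat.pos_of_ne_zero (NeZero.ne n)
  have hnne : (n:ℝ) ≠ 0 := Nat.cast_ne_zero.2 (NeZero.ne n)
  set y : Fin n → ℝ := fun k => ((AddCircle.equivIco (2*Real.pi) 0 (f k)) : ℝ) with hy
  have hy_mem : ∀ k, y k ∈ Set.Ico (0:ℝ) (0 + 2*Real.pi) :=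
    fun k => (AddCircle.equivIco (2*Real.pi) 0 (f k)).2
  have hy_coe : ∀ k, ((y k : ℝ) : Circ) = f k :=
    fun k => (AddCircle.equivIco (2*Real.pi) 0).symm_apply_apply (f k)
  set σ := Tuple.sort y with hσ
  set Y := y ∘ σ with hY
  have hYmono : Monotone Y := Tuple.monotone_sort y
  have hY_mem : ∀ k, Y k ∈ Set.Ico (0:ℝ) (0 + 2*Real.pi) := fun k => hy_mem (σ k)
  set Z : ℕ → ℝ := fun k => if h : k < n then Y ⟨k, h⟩ else Y 0 + 2*Real.pi with hZ
  have hZ0 : Z 0 = Y 0 := by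
    simp only [hZ, dif_pos hn0]
    congr 1
  have hZn : Z n = Y 0 + 2*Real.pi := by simp [hZ]
  have hZstep : ∀ k, k < n → Z k ≤ Z (k+1) := by
    intro k hk
    by_cases h' : k + 1 < n
    · simp only [hZ, dif_pos hk, dif_pos h']
      exact hYmono (by simp [Fin.mk_le_mk])
    · simp only [hZ, dif_pos hk, dif_neg h']
      have h1 := (hY_mem ⟨k, hk⟩).2
      have h2 := (hY_mem 0).1
      simp at h1
      linarith
  set r : Fin n → ℝ := fun i => (Z ((i:ℕ)+1) - Z i) / (2*Real.pi) with hr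
  have hSS : ∀ k : ℕ, k ≤ n → SS r k = (Z k - Z 0)/(2*Real.pi) := by
    intro k hk
    induction k with
    | zero => simp
    | succ k ih =>
        rw [SS_succ, ih (by omega)]
        have hkn : k < n := by omega
        have : r (k : Fin n) = (Z (k+1) - Z k) / (2*Real.pi) := by
          simp only [hr]
          rw [Fin.val_cast_of_lt hkn]
        rw [this]
        ring
  have hrmem : r ∈ stdSimplex ℝ (Fin n) := by
    constructor
    · intro i
      have := hZstep (i:ℕ) i.isLt
      simp only [hr]
      have hpos : (0:ℝ) ≤ 2*Real.pi := le_of_lt hppos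
      exact div_nonneg (by linarith) hpos
    · rw [← SS_univ, hSS n le_rfl, hZn, hZ0]
      field_simp
      ring
  set t : ℝ := (n:ℝ) * Y 0 / (2*Real.pi) + BB r with ht
  have hXC : ∀ k : Fin n, XC r t k = Y k := by
    intro k
    unfold XC
    rw [hSS (k:ℕ) (le_of_lt k.isLt)]
    have hZk : Z (k:ℕ) = Y k := by
      simp only [hZ, dif_pos k.isLt]
    rw [hZk, hZ0, ht]
    field_simp
    ring
  have hPhi : f ∘ σ = Phi r t := by
    funext k
    show f (σ k) = ((XC r t k : ℝ) : Circ)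
    rw [hXC k]
    exact (hy_coe (σ k)).symm
  exact ⟨r, t, hrmem, Quotient.sound ⟨σ, hPhi⟩⟩

omit [NeZero n] in
lemma aux_lt {X X' : Fin n → ℝ} (hm : Monotone X) (hm' : Monotone X')
    (h : ∀ x : ℝ, (Finset.univ.filter (fun k => X k ≤ x)).card
        = (Finset.univ.filter (fun k => X' k ≤ x)).card)
    (k : Fin n) (hprev : ∀ j, j < k → X j = X' j) (hlt : X k < X' k) : False := by
  classical
  have h1 : (Finset.univ.filter (fun j => X' j ≤ X k)) = Finset.Iio k := by
    ext j
    simp only [Finset.mem_filter, Finset.mem_univ, true_and, Finset.mem_Iio]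
    constructor
    · intro hj
      by_contra hj'
      push_neg at hj'
      exact absurd (le_trans (hm' hj') hj) (not_le.2 hlt)
    · intro hj
      rw [← hprev j hj]
      exact hm (le_of_lt hj)
  have h2 : Finset.Iic k ⊆ Finset.univ.filter (fun j => X j ≤ X k) := by
    intro j hj
    simp only [Finset.mem_Iic] at hj
    simp only [Finset.mem_filter, Finset.mem_univ, true_and]
    exact hm hj
  have h3 := h (X k)
  rw [h1, Fin.card_Iio] at h3
  have h4 := Finset.card_le_card h2
  rw [Fin.card_Iic] at h4
  omega

omit [NeZero n] in
lemma monotone_eq_of_card {X X' : Fin n → ℝ} (hm : Monotone X) (hm' : Monotone X')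
    (h : ∀ x : ℝ, (Finset.univ.filter (fun k => X k ≤ x)).card
        = (Finset.univ.filter (fun k => X' k ≤ x)).card) : X = X' := by
  classical
  by_contra hne
  have hD : (Finset.univ.filter (fun k => X k ≠ X' k)).Nonempty := by
    by_contra hD
    rw [Finset.not_nonempty_iff_eq_empty, Finset.filter_eq_empty_iff] at hD
    exact hne (funext fun k => by_contra fun hk => hD (Finset.mem_univ k) hk)
  set k0 := (Finset.univ.filter (fun k => X k ≠ X' k)).min' hD with hk0
  have hk0mem := (Finset.univ.filter (fun k => X k ≠ X' k)).min'_mem hD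
  rw [Finset.mem_filter] at hk0mem
  have hprev : ∀ j, j < k0 → X j = X' j := by
    intro j hj
    by_contra hjne
    have : k0 ≤ j := Finset.min'_le _ j (Finset.mem_filter.2 ⟨Finset.mem_univ j, hjne⟩)
    exact absurd hj (not_lt.2 this)
  rcases lt_trichotomy (X k0) (X' k0) with hlt | heq | hgt
  · exact aux_lt hm hm' h k0 hprev hlt
  · exact hk0mem.2 heq
  · exact aux_lt hm' hm (fun x => (h x).symm) k0 (fun j hj => (hprev j hj).symm) hgt

lemma sorted_unique_aux (X X' : Fin n → ℝ) (hm : Monotone X) (hm' : Monotone X')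
    (hspan : ∀ k, X k ≤ X 0 + 2*Real.pi) (hspan' : ∀ k, X' k ≤ X' 0 + 2*Real.pi)
    (hsum : ∑ k, X k = ∑ k, X' k)
    (σ : Equiv.Perm (Fin n)) (m : Fin n → ℤ)
    (hc : ∀ k, X' (σ k) = X k + 2*Real.pi * m k)
    (h0 : X 0 ≤ X' 0) : X = X' := by
  classical
  have hπ : (0:ℝ) < 2*Real.pi := by positivity
  have hmin : ∀ k, X 0 ≤ X k := fun k => hm (Fin.zero_le k)
  have hmin' : ∀ k, X' 0 ≤ X' k := fun k => hm' (Fin.zero_le k)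
  have hmsum : ∑ k, (m k : ℝ) = 0 := by
    have h1 : ∑ k, X' (σ k) = ∑ k, X' k := Equiv.sum_comp σ X'
    have h2 : ∑ k, X' (σ k) = ∑ k, X k + 2*Real.pi * ∑ k, (m k:ℝ) := by
      rw [Finset.mul_sum, ← Finset.sum_add_distrib]
      exact Finset.sum_congr rfl fun k _ => hc k
    have : 2*Real.pi * ∑ k, (m k:ℝ) = 0 := by linarith [h1, h2, hsum]
    exact (mul_eq_zero.1 this).resolve_left (ne_of_gt hπ)
  have hlt : X' 0 < X 0 + 2*Real.pi := by
    by_contra hge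
    push_neg at hge
    have hstrict : ∑ k, X k < ∑ k, X' k := by
      apply Finset.sum_lt_sum
      · intro k _
        exact le_trans (hspan k) (le_trans hge (hmin' k))
      · exact ⟨0, Finset.mem_univ 0, by linarith [hmin' (0 : Fin n), hπ]⟩
    exact absurd hsum (ne_of_lt hstrict)
  have hbound : ∀ k, -1 ≤ m k ∧ m k ≤ 1 := by
    intro k
    have hub : 2*Real.pi * (m k:ℝ) < 2*(2*Real.pi) := by
      have := hspan' (σ k)
      have h2 := hc k
      have h3 := hmin k
      nlinarith [hlt]
    have hlb : -(2*Real.pi) ≤ 2*Real.pi * (m k:ℝ) := by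
      have := hmin' (σ k)
      have h2 := hc k
      have h3 := hspan k
      nlinarith [h0]
    have hub' : (m k:ℝ) < 2 := by
      nlinarith
    have hlb' : (-1:ℝ) ≤ (m k:ℝ) := by nlinarith
    constructor
    · exact_mod_cast hlb'
    · have : m k < 2 := by exact_mod_cast hub'
      omega
  set A := Finset.univ.filter (fun k => m k = 1) with hA
  set B := Finset.univ.filter (fun k => m k = -1) with hB
  set C := (Finset.univ.filter (fun k => ¬ m k = 1)).filter (fun k => ¬ m k = -1) with hC
  have hBeq : (Finset.univ.filter (fun k => ¬ m k = 1)).filter (fun k => m k = -1) = B := by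
    ext k
    simp only [Finset.mem_filter, Finset.mem_univ, true_and, hB]
    omega
  have hsplit : ∀ g : Fin n → ℤ, ∑ k, g k = ∑ k ∈ A, g k + (∑ k ∈ B, g k + ∑ k ∈ C, g k) := by
    intro g
    rw [← Finset.sum_filter_add_sum_filter_not Finset.univ (fun k => m k = 1) g,
      ← Finset.sum_filter_add_sum_filter_not (Finset.univ.filter (fun k => ¬ m k = 1))
        (fun k => m k = -1) g, hBeq]
  have hsplitN : ∀ g : Fin n → ℕ, ∑ k, g k = ∑ k ∈ A, g k + (∑ k ∈ B, g k + ∑ k ∈ C, g k) := by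
    intro g
    rw [← Finset.sum_filter_add_sum_filter_not Finset.univ (fun k => m k = 1) g,
      ← Finset.sum_filter_add_sum_filter_not (Finset.univ.filter (fun k => ¬ m k = 1))
        (fun k => m k = -1) g, hBeq]
  have hmz : ∑ k, m k = 0 := by
    have : ((∑ k, m k : ℤ) : ℝ) = 0 := by push_cast; exact hmsum
    exact_mod_cast this
  have hABcard : A.card = B.card := by
    have e1 : ∑ k ∈ A, m k = A.card := by
      rw [Finset.sum_congr rfl (fun k hk => (Finset.mem_filter.1 hk).2)]
      simp [hA]
    have e2 : ∑ k ∈ B, m k = -(B.card : ℤ) := by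
      rw [Finset.sum_congr rfl (fun k hk => (Finset.mem_filter.1 hk).2)]
      simp [hB]
    have e3 : ∑ k ∈ C, m k = 0 := by
      apply Finset.sum_eq_zero
      intro k hk
      simp only [hC, Finset.mem_filter, Finset.mem_univ, true_and] at hk
      have := hbound k
      omega
    have := hsplit m
    rw [hmz, e1, e2, e3] at this
    omega
  by_cases hBne : B.Nonempty
  · -- the degenerate case : X' 0 = X 0
    obtain ⟨b, hb⟩ := hBne
    have hmb : m b = -1 := (Finset.mem_filter.1 hb).2
    have ha : X' 0 = X 0 := by
      have h1 := hc b
      rw [hmb] at h1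
      have h2 := hspan b
      have h3 := hmin' (σ b)
      push_cast at h1
      linarith
    have hA1 : ∀ k, m k = 1 → X k = X 0 := by
      intro k hk
      have h1 := hc k
      rw [hk] at h1
      have h2 := hspan' (σ k)
      push_cast at h1
      have := hmin k
      linarith [ha]
    have hB1 : ∀ k, m k = -1 → X k = X 0 + 2*Real.pi := by
      intro k hk
      have h1 := hc k
      rw [hk] at h1
      have h2 := hmin' (σ k)
      push_cast at h1
      have := hspan k
      linarith [ha]
    apply monotone_eq_of_card hm hm'
    intro x
    rw [Finset.card_filter, Finset.card_filter]
    rw [← Equiv.sum_comp σ (fun k => if X' k ≤ x then 1 else 0)]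
    rw [hsplitN (fun k => if X k ≤ x then 1 else 0),
      hsplitN (fun k => if X' (σ k) ≤ x then 1 else 0)]
    have eA1 : ∑ k ∈ A, (if X k ≤ x then 1 else 0)
        = A.card * (if X 0 ≤ x then 1 else 0) := by
      have hpt : ∀ k ∈ A, (if X k ≤ x then (1:ℕ) else 0)
          = (if X 0 ≤ x then 1 else 0) := by
        intro k hk
        rw [hA1 k (Finset.mem_filter.1 hk).2]
      rw [Finset.sum_congr rfl hpt, Finset.sum_const, smul_eq_mul]
    have eA2 : ∑ k ∈ A, (if X' (σ k) ≤ x then 1 else 0)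
        = A.card * (if X 0 + 2*Real.pi ≤ x then 1 else 0) := by
      have hpt : ∀ k ∈ A, (if X' (σ k) ≤ x then (1:ℕ) else 0)
          = (if X 0 + 2*Real.pi ≤ x then 1 else 0) := by
        intro k hk
        have h1 := hc k
        rw [(Finset.mem_filter.1 hk).2] at h1
        push_cast at h1
        have hval : X' (σ k) = X 0 + 2*Real.pi := by
          have := hA1 k (Finset.mem_filter.1 hk).2
          linarith
        rw [hval]
      rw [Finset.sum_congr rfl hpt, Finset.sum_const, smul_eq_mul]
    have eB1 : ∑ k ∈ B, (if X k ≤ x then 1 else 0)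
        = B.card * (if X 0 + 2*Real.pi ≤ x then 1 else 0) := by
      have hpt : ∀ k ∈ B, (if X k ≤ x then (1:ℕ) else 0)
          = (if X 0 + 2*Real.pi ≤ x then 1 else 0) := by
        intro k hk
        rw [hB1 k (Finset.mem_filter.1 hk).2]
      rw [Finset.sum_congr rfl hpt, Finset.sum_const, smul_eq_mul]
    have eB2 : ∑ k ∈ B, (if X' (σ k) ≤ x then 1 else 0)
        = B.card * (if X 0 ≤ x then 1 else 0) := by
      have hpt : ∀ k ∈ B, (if X' (σ k) ≤ x then (1:ℕ) else 0)
          = (if X 0 ≤ x then 1 else 0) := by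
        intro k hk
        have h1 := hc k
        rw [(Finset.mem_filter.1 hk).2] at h1
        push_cast at h1
        have hval : X' (σ k) = X 0 := by
          have := hB1 k (Finset.mem_filter.1 hk).2
          linarith
        rw [hval]
      rw [Finset.sum_congr rfl hpt, Finset.sum_const, smul_eq_mul]
    have eC : ∑ k ∈ C, (if X' (σ k) ≤ x then 1 else 0)
        = ∑ k ∈ C, (if X k ≤ x then 1 else 0) := by
      apply Finset.sum_congr rfl
      intro k hk
      simp only [hC, Finset.mem_filter, Finset.mem_univ, true_and] at hk
      have hk0 : m k = 0 := by have := hbound k; omega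
      have h1 := hc k
      rw [hk0] at h1
      push_cast at h1
      have hval : X' (σ k) = X k := by linarith
      rw [hval]
    rw [eA1, eA2, eB1, eB2, eC, hABcard]
    ring
  · -- B empty, hence A empty, hence m ≡ 0
    rw [Finset.not_nonempty_iff_eq_empty] at hBne
    have hAe : A = ∅ := by
      rw [← Finset.card_eq_zero, hABcard, hBne, Finset.card_empty]
    have hm0 : ∀ k, m k = 0 := by
      intro k
      have h1 : k ∉ A := by rw [hAe]; exact Finset.notMem_empty k
      have h2 : k ∉ B := by rw [hBne]; exact Finset.notMem_empty k
      simp only [hA, hB, Finset.mem_filter, Finset.mem_univ, true_and] at h1 h2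
      have := hbound k
      omega
    have hXX : X' ∘ σ = X := by
      funext k
      show X' (σ k) = X k
      have h1 := hc k
      rw [hm0 k] at h1
      push_cast at h1
      linarith
    have := Tuple.unique_monotone (f := X') (σ := σ) (τ := 1)
      (by rw [show X' ∘ ⇑σ = X from hXX]; exact hm) (by simpa using hm')
    rw [hXX] at this
    simpa using this

lemma sorted_unique (X X' : Fin n → ℝ) (hm : Monotone X) (hm' : Monotone X')
    (hspan : ∀ k, X k ≤ X 0 + 2*Real.pi) (hspan' : ∀ k, X' k ≤ X' 0 + 2*Real.pi)
    (hsum : ∑ k, X k = ∑ k, X' k)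
    (σ : Equiv.Perm (Fin n)) (m : Fin n → ℤ)
    (hc : ∀ k, X' (σ k) = X k + 2*Real.pi * m k) : X = X' := by
  rcases le_total (X 0) (X' 0) with h0 | h0
  · exact sorted_unique_aux X X' hm hm' hspan hspan' hsum σ m hc h0
  · refine (sorted_unique_aux X' X hm' hm hspan' hspan hsum.symm σ⁻¹
      (fun k => - m (σ⁻¹ k)) ?_ h0).symm
    intro k
    have := hc (σ⁻¹ k)
    push_cast
    simp only [Equiv.Perm.coe_inv, Equiv.apply_symm_apply] at this ⊢
    linarith

lemma XC_monotone {r : Fin n → ℝ} (hr : r ∈ stdSimplex ℝ (Fin n)) (t : ℝ) :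
    Monotone (XC r t) := by
  intro j k hjk
  unfold XC
  have h := SS_mono hr.1 (show (j:ℕ) ≤ (k:ℕ) from hjk)
  have hπ : (0:ℝ) < 2*Real.pi := by positivity
  nlinarith

lemma XC_span {r : Fin n → ℝ} (hr : r ∈ stdSimplex ℝ (Fin n)) (t : ℝ) (k : Fin n) :
    XC r t k ≤ XC r t 0 + 2*Real.pi := by
  unfold XC
  have h0 : ((0 : Fin n) : ℕ) = 0 := rfl
  have h1 : SS r ((0:Fin n):ℕ) = 0 := by rw [h0]; simp
  have h2 : SS r (k:ℕ) ≤ 1 := by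
    have := SS_mono hr.1 (le_of_lt k.isLt)
    rw [SS_univ, hr.2] at this
    exact this
  have hπ : (0:ℝ) < 2*Real.pi := by positivity
  rw [h1]
  nlinarith

lemma XC_inj {r r' : Fin n → ℝ} (hr : r ∈ stdSimplex ℝ (Fin n))
    (hr' : r' ∈ stdSimplex ℝ (Fin n)) (t : ℝ)
    (h : XC r t = XC r' t) : r = r' := by
  have hπ : (0:ℝ) < 2*Real.pi := by positivity
  have hBB : BB r = BB r' := by
    have h0 := congrFun h 0
    unfold XC at h0
    have hnne : (n:ℝ) ≠ 0 := Nat.cast_ne_zero.2 (NeZero.ne n)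
    have hS0 : SS r ((0:Fin n):ℕ) = 0 := by simp [show ((0:Fin n):ℕ) = 0 from rfl]
    have hS0' : SS r' ((0:Fin n):ℕ) = 0 := by simp [show ((0:Fin n):ℕ) = 0 from rfl]
    rw [hS0, hS0'] at h0
    have := mul_left_cancel₀ (ne_of_gt hπ) h0
    field_simp at this
    linarith
  have hSS : ∀ k : ℕ, k ≤ n → SS r k = SS r' k := by
    intro k hk
    rcases lt_or_eq_of_le hk with hlt | heq
    · have hke := congrFun h ⟨k, hlt⟩
      unfold XC at hke
      have h2 := mul_left_cancel₀ (ne_of_gt hπ) hke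
      rw [hBB] at h2
      linarith [h2]
    · subst heq
      rw [SS_univ, SS_univ, hr.2, hr'.2]
  funext i
  have h1 := hSS ((i:ℕ)+1) (Nat.succ_le_of_lt i.isLt)
  have h2 := hSS (i:ℕ) (le_of_lt i.isLt)
  rw [SS_succ, SS_succ] at h1
  have : r ((i:ℕ) : Fin n) = r' ((i:ℕ) : Fin n) := by linarith
  rwa [Fin.cast_val_eq_self] at this

omit [NeZero n] in
lemma circ_eq_int {x y : ℝ} (h : (x : Circ) = (y : Circ)) :
    ∃ m : ℤ, x = y + 2*Real.pi * m := by
  have h2 : x - y ∈ AddSubgroup.zmultiples (2*Real.pi) := by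
    rwa [← QuotientAddGroup.eq_iff_sub_mem]
  obtain ⟨m, hm⟩ := AddSubgroup.mem_zmultiples_iff.1 h2
  exact ⟨m, by rw [zsmul_eq_mul] at hm; linarith⟩

lemma phi_inj {r r' : Fin n → ℝ} (hr : r ∈ stdSimplex ℝ (Fin n))
    (hr' : r' ∈ stdSimplex ℝ (Fin n)) (t : ℝ)
    (h : (⟦Phi r t⟧ : SymProd Circ n) = ⟦Phi r' t⟧) : r = r' := by
  obtain ⟨σ, hσ⟩ := Quotient.exact h
  have hex : ∀ k, ∃ mk : ℤ, XC r t (σ k) = XC r' t k + 2*Real.pi * mk := by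
    intro k
    have := congrFun hσ k
    exact circ_eq_int this
  choose m hm using hex
  have := sorted_unique (XC r' t) (XC r t) (XC_monotone hr' t) (XC_monotone hr t)
    (XC_span hr' t) (XC_span hr t) (by rw [sum_XC, sum_XC]) σ m hm
  exact (XC_inj hr' hr t this).symm

lemma symSum_phi (r : Fin n → ℝ) (t : ℝ) :
    symSum n (⟦Phi r t⟧ : SymProd Circ n) = ((2*Real.pi*t : ℝ) : Circ) := by
  show ∑ i, Phi r t i = ((2*Real.pi*t : ℝ) : Circ)
  have : ∑ i, Phi r t i
      = ((QuotientAddGroup.mk' (AddSubgroup.zmultiples (2*Real.pi))) (∑ i, XC r t i)) := by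
    rw [map_sum (QuotientAddGroup.mk' (AddSubgroup.zmultiples (2*Real.pi)))
      (fun i => XC r t i) Finset.univ]
    rfl
  rw [this, sum_XC]
  rfl

omit [NeZero n] in
lemma isOpenMap_mk : IsOpenMap (Quotient.mk (symSetoid Circ n)) := by
  intro U hU
  have key : (Quotient.mk (symSetoid Circ n)) ⁻¹' ((Quotient.mk (symSetoid Circ n)) '' U)
      = ⋃ σ : Equiv.Perm (Fin n), (fun g : Fin n → Circ => g ∘ σ) ⁻¹' U := by
    ext g
    simp only [Set.mem_preimage, Set.mem_image, Set.mem_iUnion]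
    constructor
    · rintro ⟨f, hfU, hfg⟩
      obtain ⟨σ, hσ⟩ := Quotient.exact hfg
      refine ⟨σ⁻¹, ?_⟩
      have : g ∘ ⇑σ⁻¹ = f := by
        subst hσ
        funext x
        simp
      rwa [this]
    · rintro ⟨σ, hσ⟩
      refine ⟨g ∘ σ, hσ, Quotient.sound ⟨σ⁻¹, ?_⟩⟩
      funext x
      simp
  have : IsOpen ((Quotient.mk (symSetoid Circ n)) ⁻¹' ((Quotient.mk (symSetoid Circ n)) '' U)) := by
    rw [key]
    apply isOpen_iUnion
    intro σ
    exact IsOpen.preimage (continuous_pi fun i => continuous_apply (σ i)) hU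
  exact this

omit [NeZero n] in
lemma t2_symProd : T2Space (SymProd Circ n) := by
  constructor
  intro a b hab
  obtain ⟨f, rfl⟩ := Quotient.exists_rep a
  obtain ⟨g, rfl⟩ := Quotient.exists_rep b
  have hclosed : IsClosed {p : (Fin n → Circ) × (Fin n → Circ) |
      ∃ σ : Equiv.Perm (Fin n), p.1 ∘ σ = p.2} := by
    have h1 : {p : (Fin n → Circ) × (Fin n → Circ) | ∃ σ : Equiv.Perm (Fin n), p.1 ∘ σ = p.2}
        = ⋃ σ : Equiv.Perm (Fin n), {p : (Fin n → Circ) × (Fin n → Circ) | p.1 ∘ σ = p.2} := by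
      ext p
      simp [Set.mem_iUnion]
    rw [h1]
    apply isClosed_iUnion_of_finite
    intro σ
    have h2 : {p : (Fin n → Circ) × (Fin n → Circ) | p.1 ∘ ⇑σ = p.2}
        = ⋂ i, {p : (Fin n → Circ) × (Fin n → Circ) | p.1 (σ i) = p.2 i} := by
      ext p
      simp [funext_iff, Function.comp]
    rw [h2]
    exact isClosed_iInter fun i => isClosed_eq
      ((continuous_apply (σ i)).comp continuous_fst)
      ((continuous_apply i).comp continuous_snd)
  have hmem : (f, g) ∈ {p : (Fin n → Circ) × (Fin n → Circ) |
      ∃ σ : Equiv.Perm (Fin n), p.1 ∘ σ = p.2}ᶜ := by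
    rintro ⟨σ, hσ⟩
    exact hab (Quotient.sound ⟨σ, hσ⟩)
  obtain ⟨U, V, hU, hV, hfU, hgV, hUV⟩ := isOpen_prod_iff.1 hclosed.isOpen_compl f g hmem
  refine ⟨Quotient.mk _ '' U, Quotient.mk _ '' V, isOpenMap_mk U hU, isOpenMap_mk V hV,
    ⟨f, hfU, rfl⟩, ⟨g, hgV, rfl⟩, ?_⟩
  rw [Set.disjoint_left]
  rintro x ⟨u, huU, hux⟩ ⟨v, hvV, hvx⟩
  obtain ⟨σ, hσ⟩ := Quotient.exact (hux.trans hvx.symm)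
  exact (hUV (Set.mk_mem_prod huU hvV)) ⟨σ, hσ⟩

lemma continuous_PhiMapAux :
    Continuous (fun p : ↥(stdSimplex ℝ (Fin n)) × ℝ =>
      (⟦Phi (p.1 : Fin n → ℝ) p.2⟧ : SymProd Circ n)) := by
  apply Continuous.comp
  · exact continuous_quotient_mk'
  · apply continuous_pi
    intro k
    apply Continuous.comp
    · exact AddCircle.continuous_mk' (2*Real.pi)
    · have hSS : ∀ j : ℕ, Continuous (fun p : ↥(stdSimplex ℝ (Fin n)) × ℝ =>
          SS (p.1 : Fin n → ℝ) j) := by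
        intro j
        unfold SS
        exact continuous_finset_sum _ fun i _ =>
          (continuous_apply _).comp (continuous_subtype_val.comp continuous_fst)
      have hBB : Continuous (fun p : ↥(stdSimplex ℝ (Fin n)) × ℝ =>
          BB (p.1 : Fin n → ℝ)) := by
        unfold BB
        exact continuous_finset_sum _ fun j _ => hSS j
      unfold XC
      exact Continuous.mul continuous_const
        (((continuous_snd.div_const _).add (hSS _)).sub (hBB.div_const _))

omit [NeZero n] in
lemma mem_simplex_comp (x : Fin n → ℝ) (hx : x ∈ stdSimplex ℝ (Fin n))
    (σ : Equiv.Perm (Fin n)) : x ∘ σ ∈ stdSimplex ℝ (Fin n) :=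
  ⟨fun i => hx.1 _, comp_perm_sum x σ hx.2⟩

/-- The monodromy: cyclic shift of barycentric coordinates. -/
def simplexShift (n : ℕ) [NeZero n] : ↥(stdSimplex ℝ (Fin n)) ≃ₜ ↥(stdSimplex ℝ (Fin n)) where
  toFun x := ⟨(x : Fin n → ℝ) ∘ cshift n, mem_simplex_comp _ x.2 _⟩
  invFun x := ⟨(x : Fin n → ℝ) ∘ ⇑((cshift n)⁻¹), mem_simplex_comp _ x.2 _⟩
  left_inv x := by
    apply Subtype.ext
    funext i
    exact congrArg (x : Fin n → ℝ) ((cshift n).apply_symm_apply i)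
  right_inv x := by
    apply Subtype.ext
    funext i
    exact congrArg (x : Fin n → ℝ) ((cshift n).symm_apply_apply i)
  continuous_toFun := by
    apply Continuous.subtype_mk
    exact continuous_pi fun i => (continuous_apply _).comp continuous_subtype_val
  continuous_invFun := by
    apply Continuous.subtype_mk
    exact continuous_pi fun i => (continuous_apply _).comp continuous_subtype_val

/-- integer-power shift on the simplex. -/
def sshift (j : ℤ) (x : ↥(stdSimplex ℝ (Fin n))) : ↥(stdSimplex ℝ (Fin n)) :=
  ⟨(x : Fin n → ℝ) ∘ (cshift n ^ j : Equiv.Perm (Fin n)), mem_simplex_comp _ x.2 _⟩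

lemma sshift_zero (x : ↥(stdSimplex ℝ (Fin n))) : sshift 0 x = x := by
  apply Subtype.ext
  funext i
  simp [sshift]
  rfl

lemma simplexShift_sshift (j : ℤ) (x : ↥(stdSimplex ℝ (Fin n))) :
    simplexShift n (sshift j x) = sshift (j+1) x := by
  apply Subtype.ext
  show ((x : Fin n → ℝ) ∘ ⇑(cshift n ^ j)) ∘ ⇑(cshift n)
    = (x : Fin n → ℝ) ∘ ⇑(cshift n ^ (j+1))
  rw [zpow_add_one]
  rfl

lemma torus_shift_z (x : ↥(stdSimplex ℝ (Fin n))) (t : ℝ) (j : ℤ) :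
    (Quot.mk _ (x, t) : MappingTorus (simplexShift n)) = Quot.mk _ (sshift j x, t + j) := by
  induction j using Int.induction_on with
  | zero => rw [sshift_zero]; norm_num
  | succ j ih =>
      rw [ih]
      have hbase : (Quot.mk _ (sshift (j:ℤ) x, t + ((j:ℤ):ℝ)) : MappingTorus (simplexShift n))
          = Quot.mk _ (simplexShift n (sshift (j:ℤ) x), (t + ((j:ℤ):ℝ)) + 1) :=
        Quot.sound rfl
      rw [hbase, simplexShift_sshift]
      congr 2
      push_cast
      ring
  | pred j ih =>
      have hbase : (Quot.mk _ (sshift (-(j:ℤ)-1) x, t + ((-(j:ℤ)-1 : ℤ):ℝ))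
            : MappingTorus (simplexShift n))
          = Quot.mk _ (simplexShift n (sshift (-(j:ℤ)-1) x), (t + ((-(j:ℤ)-1 : ℤ):ℝ)) + 1) :=
        Quot.sound rfl
      rw [simplexShift_sshift, show (-(j:ℤ)-1) + 1 = -(j:ℤ) by ring] at hbase
      rw [show (t + ((-(j:ℤ)-1 : ℤ):ℝ)) + 1 = t + ((-(j:ℤ) : ℤ):ℝ) by push_cast; ring] at hbase
      rw [← ih] at hbase
      exact hbase.symm

noncomputable def Fmap (n : ℕ) [NeZero n] : MappingTorus (simplexShift n) → SymProd Circ n :=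
  Quot.lift
    (fun p : ↥(stdSimplex ℝ (Fin n)) × ℝ => (⟦Phi (p.1 : Fin n → ℝ) p.2⟧ : SymProd Circ n))
    (by
      rintro p q h
      rw [h]
      exact quot_shift (p.1 : Fin n → ℝ) p.1.2.2 p.2)

lemma continuous_Fmap : Continuous (Fmap n) :=
  continuous_quot_lift _ continuous_PhiMapAux

lemma Fmap_surj : Function.Surjective (Fmap n) := by
  intro q
  obtain ⟨f, rfl⟩ := Quotient.exists_rep q
  obtain ⟨r, t, hr, heq⟩ := exists_rep f
  exact ⟨Quot.mk _ (⟨r, hr⟩, t), heq.symm⟩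

lemma Fmap_inj : Function.Injective (Fmap n) := by
  have key : ∀ (p q : ↥(stdSimplex ℝ (Fin n)) × ℝ),
      Fmap n (Quot.mk _ p) = Fmap n (Quot.mk _ q) →
        (Quot.mk _ p : MappingTorus (simplexShift n)) = Quot.mk _ q := by
    rintro ⟨x, t⟩ ⟨y, s⟩ h
    have hπ : (0:ℝ) < 2*Real.pi := by positivity
    have h' : (⟦Phi (x : Fin n → ℝ) t⟧ : SymProd Circ n) = ⟦Phi (y : Fin n → ℝ) s⟧ := h
    have hsum : ((2*Real.pi*t : ℝ) : Circ) = ((2*Real.pi*s : ℝ) : Circ) := by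
      rw [← symSum_phi (x : Fin n → ℝ) t, ← symSum_phi (y : Fin n → ℝ) s, h']
    obtain ⟨m, hm⟩ := circ_eq_int hsum
    have htm : t = s + m := by
      have h2 : 2*Real.pi*t = 2*Real.pi*(s + m) := by linarith
      exact mul_left_cancel₀ (ne_of_gt hπ) h2
    have hshift := quot_shift_z (y : Fin n → ℝ) y.2.2 s m
    rw [show s + (m:ℝ) = t from htm.symm] at hshift
    have h3 : (⟦Phi (x : Fin n → ℝ) t⟧ : SymProd Circ n)
        = ⟦Phi ((y : Fin n → ℝ) ∘ (cshift n ^ m : Equiv.Perm (Fin n))) t⟧ := h'.trans hshift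
    have hxy : (x : Fin n → ℝ) = (y : Fin n → ℝ) ∘ (cshift n ^ m : Equiv.Perm (Fin n)) :=
      phi_inj x.2 (mem_simplex_comp _ y.2 _) t h3
    have hq := torus_shift_z y s m
    have hx_eq : sshift m y = x := Subtype.ext hxy.symm
    rw [hx_eq, show s + (m:ℝ) = t from htm.symm] at hq
    exact hq.symm
  intro p q
  refine Quot.ind (β := fun p' => Fmap n p' = Fmap n q → p' = q) ?_ p
  intro a
  refine Quot.ind
    (β := fun q' => Fmap n (Quot.mk _ a) = Fmap n q' → Quot.mk _ a = q') ?_ q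
  intro b
  exact key a b

lemma compactSpace_MT : CompactSpace (MappingTorus (simplexShift n)) := by
  haveI : CompactSpace ↥(stdSimplex ℝ (Fin n)) :=
    isCompact_iff_compactSpace.1 (isCompact_stdSimplex ℝ (Fin n))
  constructor
  have hK : IsCompact ((Set.univ : Set ↥(stdSimplex ℝ (Fin n))) ×ˢ Set.Icc (0:ℝ) 1) :=
    isCompact_univ.prod isCompact_Icc
  have himg : (Set.univ : Set (MappingTorus (simplexShift n)))
      ⊆ (Quot.mk _) '' ((Set.univ : Set ↥(stdSimplex ℝ (Fin n))) ×ˢ Set.Icc (0:ℝ) 1) := by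
    intro q _
    refine Quot.ind (β := fun q => q ∈ (Quot.mk _) ''
      ((Set.univ : Set ↥(stdSimplex ℝ (Fin n))) ×ˢ Set.Icc (0:ℝ) 1)) ?_ q
    rintro ⟨x, t⟩
    refine ⟨(sshift (-⌊t⌋) x, t + ((-⌊t⌋ : ℤ) : ℝ)), ⟨Set.mem_univ _, ?_⟩,
      (torus_shift_z x t (-⌊t⌋)).symm⟩
    simp only [Set.mem_Icc]
    have h1 := Int.fract_nonneg t
    have h2 := Int.fract_lt_one t
    have h3 : t + ((-⌊t⌋ : ℤ):ℝ) = Int.fract t := by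
      rw [Int.fract]
      push_cast
      ring
    rw [h3]
    exact ⟨h1, le_of_lt h2⟩
  have heq : (Set.univ : Set (MappingTorus (simplexShift n)))
      = (Quot.mk _) '' ((Set.univ : Set ↥(stdSimplex ℝ (Fin n))) ×ˢ Set.Icc (0:ℝ) 1) :=
    Set.eq_of_subset_of_subset himg (Set.subset_univ _)
  rw [heq]
  exact hK.image continuous_quot_mk

noncomputable def mainHomeo (n : ℕ) [NeZero n] :
    MappingTorus (simplexShift n) ≃ₜ SymProd Circ n := by
  haveI := compactSpace_MT (n := n)
  haveI := t2_symProd (n := n)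
  exact Continuous.homeoOfEquivCompactToT2
    (f := Equiv.ofBijective (Fmap n) ⟨Fmap_inj, Fmap_surj⟩) continuous_Fmap

noncomputable def fibMap (n : ℕ) [NeZero n] :
    ↥(stdSimplex ℝ (Fin n)) → {p : SymProd Circ n // symSum n p = 0} :=
  fun x => ⟨⟦Phi (x : Fin n → ℝ) 0⟧, by
    rw [symSum_phi]
    norm_num⟩

lemma continuous_fibMap : Continuous (fibMap n) := by
  apply Continuous.subtype_mk
  exact (continuous_PhiMapAux (n := n)).comp (continuous_id.prodMk continuous_const)

lemma fib_bij : Function.Bijective (fibMap n) := by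
  constructor
  · intro x y h
    have h' : (⟦Phi (x : Fin n → ℝ) 0⟧ : SymProd Circ n) = ⟦Phi (y : Fin n → ℝ) 0⟧ :=
      congrArg Subtype.val h
    exact Subtype.ext (phi_inj x.2 y.2 0 h')
  · rintro ⟨p, hp⟩
    obtain ⟨f, rfl⟩ := Quotient.exists_rep p
    obtain ⟨r, t, hr, heq⟩ := exists_rep f
    have hπ : (0:ℝ) < 2*Real.pi := by positivity
    have hp' : symSum n (⟦Phi r t⟧ : SymProd Circ n) = 0 := by rw [← heq]; exact hp
    rw [symSum_phi] at hp'
    have h0 : ((2*Real.pi*t : ℝ) : Circ) = ((0:ℝ) : Circ) := by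
      rw [hp']
      norm_num
    obtain ⟨m, hm⟩ := circ_eq_int h0
    have htm : t = m := by
      have h2 : 2*Real.pi*t = 2*Real.pi*(m:ℝ) := by linarith
      exact mul_left_cancel₀ (ne_of_gt hπ) h2
    have hshift := quot_shift_z r hr.2 t (-m)
    rw [show t + ((-m : ℤ):ℝ) = 0 by push_cast; rw [htm]; ring] at hshift
    refine ⟨⟨r ∘ (cshift n ^ (-m) : Equiv.Perm (Fin n)), mem_simplex_comp _ hr _⟩,
      Subtype.ext ?_⟩
    show (⟦Phi (r ∘ (cshift n ^ (-m) : Equiv.Perm (Fin n))) 0⟧ : SymProd Circ n) = ⟦f⟧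
    rw [heq]
    exact hshift.symm

noncomputable def fiberHomeo (n : ℕ) [NeZero n] :
    {p : SymProd Circ n // symSum n p = 0} ≃ₜ ↥(stdSimplex ℝ (Fin n)) := by
  haveI : CompactSpace ↥(stdSimplex ℝ (Fin n)) :=
    isCompact_iff_compactSpace.1 (isCompact_stdSimplex ℝ (Fin n))
  haveI := t2_symProd (n := n)
  exact (Continuous.homeoOfEquivCompactToT2
    (f := Equiv.ofBijective (fibMap n) fib_bij) continuous_fibMap).symm

end SymAux

/-- `Sym^n(S¹)` is homeomorphic to a mapping torus of a closed
`(n−1)`-simplex; in particular, the fiber `Sym^n₀(S¹)` of the sum map over `0`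
(configurations whose `n` members sum to an element of `2πℤ`) is homeomorphic to a
closed `(n−1)`-simplex. -/
theorem symProd_circle_mapping_torus (n : ℕ) (hn : 1 ≤ n) :
    (∃ φ : ↥(stdSimplex ℝ (Fin n)) ≃ₜ ↥(stdSimplex ℝ (Fin n)),
      Nonempty (SymProd Circ n ≃ₜ MappingTorus φ)) ∧
    Nonempty ({p : SymProd Circ n // symSum n p = 0} ≃ₜ ↥(stdSimplex ℝ (Fin n))) := by
  haveI : NeZero n := ⟨by omega⟩
  exact ⟨⟨SymAux.simplexShift n, ⟨(SymAux.mainHomeo n).symm⟩⟩, ⟨SymAux.fiberHomeo n⟩⟩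
end

section
/- Let Ω ⊂ ℝ^{2n−1} be the set of coefficient vectors s = (s₀, s₁, s'₁, ..., s_{n−1}, s'_{n−1}) such that all 2n complex roots of the trigonometric polynomial f_s(α) = s₀ + Σ_{k=1}^{n−1}(s_k cos kα + s'_k sin kα) + cos nα in [0,2π) × iℝ are real. Then the root map 𝐳 sending s to the unordered collection of the 2n roots of f_s gives a bijection (in fact a homeomorphism) from Ω onto Sym^{2n}_0(S¹), the set of unordered 2n-tuples of points in S¹ whose sum lies in 2πℤ. -/
open scoped Real

/-- The normalized trigonometric polynomial
`f_s(α) = s₀ + ∑_{k=1}^{n−1} (s_k cos kα + s'_k sin kα) + cos nα`, as an entire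
function of `α ∈ ℂ`.  The coefficient vector `s ∈ ℝ^{2n−1}` is encoded as
`p = (s₀, (s_k)_k, (s'_k)_k)`. -/
noncomputable def fsTrig (n : ℕ) (p : ℝ × (Fin (n - 1) → ℝ) × (Fin (n - 1) → ℝ))
    (z : ℂ) : ℂ :=
  (p.1 : ℂ) +
    (∑ k : Fin (n - 1), ((p.2.1 k : ℂ) * Complex.cos (((k : ℕ) + 1 : ℂ) * z) +
      (p.2.2 k : ℂ) * Complex.sin (((k : ℕ) + 1 : ℂ) * z))) +
    Complex.cos ((n : ℂ) * z)

/-- `Ω ⊂ ℝ^{2n−1}`: the set of coefficient vectors all of whose `2n` roots are real. -/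
def OmegaSet (n : ℕ) : Set (ℝ × (Fin (n - 1) → ℝ) × (Fin (n - 1) → ℝ)) :=
  {p | ∀ z : ℂ, fsTrig n p z = 0 → z.im = 0}

section OmegaProofAux

open Complex Polynomial Finset

noncomputable section

/-- The exponential map `Circ → ℂ`, `θ ↦ e^{iθ}`. -/
noncomputable def ee (θ : Circ) : ℂ := (AddCircle.toCircle θ : ℂ)

lemma two_pi_ne : (2 * Real.pi) ≠ 0 := by positivity

lemma ee_coe (x : ℝ) : ee (x : Circ) = Complex.exp (x * Complex.I) := by
  rw [ee, AddCircle.toCircle_apply_mk, div_self two_pi_ne, one_mul, Circle.coe_exp]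

lemma ee_abs (θ : Circ) : ‖ee θ‖ = 1 := Circle.norm_coe _

lemma ee_ne_zero (θ : Circ) : ee θ ≠ 0 := by
  intro h
  have := ee_abs θ
  rw [h] at this
  simp at this

lemma ee_inj : Function.Injective ee := fun a b h =>
  AddCircle.injective_toCircle two_pi_ne (Subtype.ext h)

lemma ee_zero : ee 0 = 1 := by rw [ee, AddCircle.toCircle_zero, Circle.coe_one]

lemma ee_add (a b : Circ) : ee (a + b) = ee a * ee b := by
  rw [ee, ee, ee, AddCircle.toCircle_add, Circle.coe_mul]

lemma ee_sum {ι : Type*} (s : Finset ι) (f : ι → Circ) :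
    ee (∑ i ∈ s, f i) = ∏ i ∈ s, ee (f i) := by
  classical
  induction s using Finset.induction with
  | empty => simp [ee_zero]
  | insert _ _ h ih => rw [Finset.sum_insert h, Finset.prod_insert h, ee_add, ih]

lemma ee_conj (θ : Circ) : (starRingEnd ℂ) (ee θ) = (ee θ)⁻¹ := by
  rw [ee, ← Circle.coe_inv_eq_conj, Circle.coe_inv]

lemma ee_cont : Continuous ee :=
  continuous_subtype_val.comp AddCircle.continuous_toCircle

/-- The monic polynomial with roots `e^{i f j}`. -/
noncomputable def Pf (m : ℕ) (f : Fin m → Circ) : Polynomial ℂ :=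
  ∏ j, (X - C (ee (f j)))

lemma Pf_monic (m : ℕ) (f : Fin m → Circ) : (Pf m f).Monic :=
  monic_prod_of_monic _ _ fun j _ => monic_X_sub_C _

lemma Pf_natDegree (m : ℕ) (f : Fin m → Circ) : (Pf m f).natDegree = m := by
  rw [Pf, natDegree_prod _ _ (fun j _ => X_sub_C_ne_zero _)]
  simp

lemma Pf_eq_multiset (m : ℕ) (f : Fin m → Circ) :
    Pf m f = ((Finset.univ.val.map (fun j => ee (f j))).map (fun t => X - C t)).prod := by
  rw [Pf, Finset.prod_eq_multiset_prod, Multiset.map_map]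
  rfl

lemma Pf_roots (m : ℕ) (f : Fin m → Circ) :
    (Pf m f).roots = Finset.univ.val.map (fun j => ee (f j)) := by
  rw [Pf_eq_multiset, roots_multiset_prod_X_sub_C]

lemma Pf_coeff (m : ℕ) (f : Fin m → Circ) {k : ℕ} (hk : k ≤ m) :
    (Pf m f).coeff k =
      (-1) ^ (m - k) * ∑ A ∈ Finset.powersetCard (m - k) Finset.univ,
        ∏ i ∈ A, ee (f i) := by
  have hcard : Multiset.card (Finset.univ.val.map (fun j : Fin m => ee (f j))) = m := by
    simp
  rw [Pf_eq_multiset, Multiset.prod_X_sub_C_coeff _ (by rw [hcard]; exact hk), hcard,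
    Finset.esymm_map_val]

abbrev PtAux (n : ℕ) := ℝ × (Fin (n - 1) → ℝ) × (Fin (n - 1) → ℝ)

lemma sum_range_pair {M : Type*} [AddCommMonoid M] (n : ℕ) (hn : 1 ≤ n) (b : ℕ → M) :
    ∑ j ∈ Finset.range (2 * n + 1), b j
      = b n + ∑ j ∈ Finset.range n, (b (n + 1 + j) + b (n - 1 - j)) := by
  have h2 : 2 * n + 1 = (n + 1) + n := by omega
  rw [h2, Finset.sum_range_add, Finset.sum_range_succ, Finset.sum_add_distrib,
    ← Finset.sum_range_reflect (fun j => b j) n]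
  abel

/-- auxiliary upper coefficients -/
noncomputable def ccc (n : ℕ) (p : PtAux n) (l : ℕ) : ℂ :=
  if h : l - 1 < n - 1 then (p.2.1 ⟨l - 1, h⟩ : ℂ) - Complex.I * (p.2.2 ⟨l - 1, h⟩ : ℂ)
  else 1

/-- coefficient function of the associated polynomial -/
noncomputable def bb (n : ℕ) (p : PtAux n) (j : ℕ) : ℂ :=
  if j = n then 2 * (p.1 : ℂ)
  else if n < j then ccc n p (j - n)
  else (starRingEnd ℂ) (ccc n p (n - j))

/-- the associated polynomial of degree `2n` -/
noncomputable def Qpoly (n : ℕ) (p : PtAux n) : Polynomial ℂ :=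
  ∑ j ∈ Finset.range (2 * n + 1), Polynomial.C (bb n p j) * Polynomial.X ^ j

variable {n : ℕ}

lemma bb_n (p : PtAux n) : bb n p n = 2 * (p.1 : ℂ) := by simp [bb]

lemma bb_2n (hn : 1 ≤ n) (p : PtAux n) : bb n p (2 * n) = 1 := by
  rw [bb, if_neg (by omega), if_pos (by omega), ccc, dif_neg (by omega)]

lemma bb_zero (hn : 1 ≤ n) (p : PtAux n) : bb n p 0 = 1 := by
  rw [bb, if_neg (by omega), if_neg (by omega), Nat.sub_zero, ccc, dif_neg (by omega)]
  simp

lemma bb_high (p : PtAux n) (k : Fin (n - 1)) :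
    bb n p (n + k + 1) = (p.2.1 k : ℂ) - Complex.I * (p.2.2 k : ℂ) := by
  have hk : (k : ℕ) < n - 1 := k.2
  rw [bb, if_neg (by omega), if_pos (by omega), ccc]
  have h1 : n + (k : ℕ) + 1 - n = (k : ℕ) + 1 := by omega
  rw [h1]
  rw [dif_pos (by simpa using hk)]
  congr 2 <;> exact congrArg _ (Fin.ext (by simp))

lemma bb_low (p : PtAux n) (k : Fin (n - 1)) :
    bb n p (n - k - 1) = (p.2.1 k : ℂ) + Complex.I * (p.2.2 k : ℂ) := by
  have hk : (k : ℕ) < n - 1 := k.2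
  rw [bb, if_neg (by omega), if_neg (by omega)]
  have h1 : n - (n - (k : ℕ) - 1) = (k : ℕ) + 1 := by omega
  rw [h1, ccc, dif_pos (show (k:ℕ) + 1 - 1 < n - 1 by omega)]
  rw [show ((⟨(k:ℕ)+1-1, by omega⟩ : Fin (n-1))) = k from Fin.ext (by simp)]
  rw [map_sub, map_mul, Complex.conj_I, Complex.conj_ofReal, Complex.conj_ofReal]
  ring

lemma coeff_Qpoly (p : PtAux n) (k : ℕ) :
    (Qpoly n p).coeff k = if k < 2 * n + 1 then bb n p k else 0 := by
  rw [Qpoly, Polynomial.finset_sum_coeff]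
  simp only [Polynomial.coeff_C_mul, Polynomial.coeff_X_pow]
  rw [Finset.sum_congr rfl (fun j _ => by
    rw [mul_ite, mul_one, mul_zero])]
  simp only [eq_comm (a := k)]
  rw [Finset.sum_ite_eq' (Finset.range (2 * n + 1)) k (bb n p)]
  simp [Finset.mem_range]

lemma natDegree_Qpoly_le (p : PtAux n) : (Qpoly n p).natDegree ≤ 2 * n := by
  apply Polynomial.natDegree_sum_le_of_forall_le
  intro j hj
  refine le_trans (Polynomial.natDegree_C_mul_le _ _) ?_
  simpa using Nat.lt_succ_iff.mp (Finset.mem_range.mp hj)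

lemma Qpoly_monic (hn : 1 ≤ n) (p : PtAux n) : (Qpoly n p).Monic := by
  apply Polynomial.monic_of_natDegree_le_of_coeff_eq_one (2 * n) (natDegree_Qpoly_le p)
  rw [coeff_Qpoly, if_pos (by omega), bb_2n hn]

lemma Qpoly_natDegree (hn : 1 ≤ n) (p : PtAux n) : (Qpoly n p).natDegree = 2 * n := by
  refine le_antisymm (natDegree_Qpoly_le p) ?_
  apply Polynomial.le_natDegree_of_ne_zero
  rw [coeff_Qpoly, if_pos (by omega), bb_2n hn]
  exact one_ne_zero

lemma Qpoly_eval (p : PtAux n) (w : ℂ) :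
    (Qpoly n p).eval w = ∑ j ∈ Finset.range (2 * n + 1), bb n p j * w ^ j := by
  rw [Qpoly, Polynomial.eval_finset_sum]
  simp

lemma cos_def' (w : ℂ) : Complex.cos w
    = (Complex.exp (w * Complex.I) + Complex.exp (-w * Complex.I)) / 2 := rfl
lemma sin_def' (w : ℂ) : Complex.sin w
    = (Complex.exp (-w * Complex.I) - Complex.exp (w * Complex.I)) * Complex.I / 2 := rfl

lemma pair_term (s s' : ℝ) (k : ℕ) (z : ℂ) :
    (s : ℂ) * Complex.cos (((k : ℕ) + 1 : ℂ) * z) + (s' : ℂ) * Complex.sin (((k : ℕ) + 1 : ℂ) * z)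
    = (1/2 : ℂ) * (((s : ℂ) - Complex.I * s') * Complex.exp ((((k:ℕ):ℂ) + 1) * Complex.I * z)
        + ((s : ℂ) + Complex.I * s') * (Complex.exp ((((k:ℕ):ℂ) + 1) * Complex.I * z))⁻¹) := by
  set u := Complex.exp ((((k:ℕ):ℂ) + 1) * Complex.I * z) with hu
  have hune : u ≠ 0 := Complex.exp_ne_zero _
  have h1 : Complex.cos (((k : ℕ) + 1 : ℂ) * z) = (u + u⁻¹) / 2 := by
    rw [cos_def', hu, ← Complex.exp_neg]; congr 2 <;> ring
  have h2 : Complex.sin (((k : ℕ) + 1 : ℂ) * z) = (u⁻¹ - u) * Complex.I / 2 := by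
    rw [sin_def', hu, ← Complex.exp_neg]; congr 3 <;> ring
  rw [h1, h2]
  field_simp
  ring

lemma fsTrig_eq {n : ℕ} (hn : 1 ≤ n) (p : PtAux n) (z : ℂ) :
    fsTrig n p z = (1/2 : ℂ) * Complex.exp (-(n : ℂ) * Complex.I * z) *
      (Qpoly n p).eval (Complex.exp (Complex.I * z)) := by
  have hEne : Complex.exp (Complex.I * z) ≠ 0 := Complex.exp_ne_zero _
  have hE : ∀ j : ℕ, Complex.exp (Complex.I * z) ^ j = Complex.exp ((j : ℂ) * (Complex.I * z)) :=
    fun j => (Complex.exp_nat_mul _ j).symm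
  -- the three exponential simplifications
  have hmid : Complex.exp (-(n : ℂ) * Complex.I * z) * Complex.exp (Complex.I * z) ^ n = 1 := by
    rw [hE, ← Complex.exp_add, ← Complex.exp_zero]; congr 1; ring
  have hhigh : ∀ j : ℕ, Complex.exp (-(n : ℂ) * Complex.I * z) *
      Complex.exp (Complex.I * z) ^ (n + 1 + j)
      = Complex.exp (((j:ℂ) + 1) * Complex.I * z) := by
    intro j
    rw [hE, ← Complex.exp_add]
    congr 1; push_cast; ring
  have hlow : ∀ j : ℕ, j < n → Complex.exp (-(n : ℂ) * Complex.I * z) *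
      Complex.exp (Complex.I * z) ^ (n - 1 - j)
      = (Complex.exp (((j:ℂ) + 1) * Complex.I * z))⁻¹ := by
    intro j hj
    rw [hE, ← Complex.exp_neg, ← Complex.exp_add]
    congr 1
    rw [show n - 1 - j = n - (j + 1) by omega, Nat.cast_sub (by omega)]
    push_cast; ring
  rw [Qpoly_eval, sum_range_pair n hn, mul_add, Finset.mul_sum]
  -- handle the middle term
  have hterm_mid : (1/2 : ℂ) * Complex.exp (-(n : ℂ) * Complex.I * z) * (bb n p n *
      Complex.exp (Complex.I * z) ^ n) = (p.1 : ℂ) := by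
    rw [bb_n]
    calc (1/2 : ℂ) * Complex.exp (-(n : ℂ) * Complex.I * z) * (2 * (p.1:ℂ) *
        Complex.exp (Complex.I * z) ^ n)
        = (p.1 : ℂ) * (Complex.exp (-(n : ℂ) * Complex.I * z) *
            Complex.exp (Complex.I * z) ^ n) := by ring
      _ = (p.1 : ℂ) := by rw [hmid]; ring
  -- the summands for j < n-1
  have hmainFin : ∀ k : Fin (n-1), (1/2 : ℂ) * Complex.exp (-(n : ℂ) * Complex.I * z) *
      (bb n p (n + 1 + (k:ℕ)) * Complex.exp (Complex.I * z) ^ (n + 1 + (k:ℕ))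
        + bb n p (n - 1 - (k:ℕ)) * Complex.exp (Complex.I * z) ^ (n - 1 - (k:ℕ)))
      = ((p.2.1 k : ℂ) * Complex.cos (((k : ℕ) + 1 : ℂ) * z)
        + (p.2.2 k : ℂ) * Complex.sin (((k : ℕ) + 1 : ℂ) * z)) := by
    intro k
    have h1 : bb n p (n + 1 + (k:ℕ)) = (p.2.1 k : ℂ) - Complex.I * (p.2.2 k : ℂ) := by
      have := bb_high p k
      rw [show n + (k:ℕ) + 1 = n + 1 + (k:ℕ) by omega] at this
      exact this
    have h2 : bb n p (n - 1 - (k:ℕ)) = (p.2.1 k : ℂ) + Complex.I * (p.2.2 k : ℂ) := by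
      have := bb_low p k
      rw [show n - (k:ℕ) - 1 = n - 1 - (k:ℕ) by omega] at this
      exact this
    rw [h1, h2, pair_term]
    have hh := hhigh (k:ℕ)
    have hl := hlow (k:ℕ) (by have := k.2; omega)
    linear_combination (1/2 : ℂ) * ((p.2.1 k : ℂ) - Complex.I * (p.2.2 k : ℂ)) * hh
      + (1/2 : ℂ) * ((p.2.1 k : ℂ) + Complex.I * (p.2.2 k : ℂ)) * hl
  -- the summand for j = n-1 gives cos nz
  have hlast : (1/2 : ℂ) * Complex.exp (-(n : ℂ) * Complex.I * z) *
      (bb n p (n + 1 + (n-1)) * Complex.exp (Complex.I * z) ^ (n + 1 + (n-1))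
        + bb n p (n - 1 - (n-1)) * Complex.exp (Complex.I * z) ^ (n - 1 - (n-1)))
      = Complex.cos ((n : ℂ) * z) := by
    rw [show n + 1 + (n-1) = 2*n by omega, show n - 1 - (n-1) = 0 by omega,
      bb_2n hn, bb_zero hn, one_mul, pow_zero, mul_one, cos_def', hE (2*n)]
    have ha : Complex.exp (-(n : ℂ) * Complex.I * z) * Complex.exp (((2*n : ℕ) : ℂ) * (Complex.I * z))
        = Complex.exp (((n:ℂ) * z) * Complex.I) := by
      rw [← Complex.exp_add]; congr 1; push_cast; ring
    have hb : Complex.exp (-(n : ℂ) * Complex.I * z)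
        = Complex.exp ((-((n:ℂ) * z)) * Complex.I) := by congr 1; ring
    linear_combination (1/2 : ℂ) * ha + (1/2 : ℂ) * hb
  -- assemble
  have hsplit : ∑ j ∈ Finset.range n, (1/2 : ℂ) * Complex.exp (-(n : ℂ) * Complex.I * z) *
        (bb n p (n + 1 + j) * Complex.exp (Complex.I * z) ^ (n + 1 + j)
          + bb n p (n - 1 - j) * Complex.exp (Complex.I * z) ^ (n - 1 - j))
      = (∑ k : Fin (n-1), ((p.2.1 k : ℂ) * Complex.cos (((k : ℕ) + 1 : ℂ) * z)
          + (p.2.2 k : ℂ) * Complex.sin (((k : ℕ) + 1 : ℂ) * z)))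
        + Complex.cos ((n : ℂ) * z) := by
    rw [show Finset.range n = Finset.range ((n-1)+1) by congr 1; omega]
    rw [Finset.sum_range_succ, hlast, ← Fin.sum_univ_eq_sum_range (fun j =>
        (1/2 : ℂ) * Complex.exp (-(n : ℂ) * Complex.I * z) *
        (bb n p (n + 1 + j) * Complex.exp (Complex.I * z) ^ (n + 1 + j)
          + bb n p (n - 1 - j) * Complex.exp (Complex.I * z) ^ (n - 1 - j))) (n-1)]
    exact congrArg (fun t => t + Complex.cos ((n:ℂ)*z))
      (Finset.sum_congr rfl (fun k _ => hmainFin k))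
  rw [hterm_mid, hsplit]
  simp only [fsTrig]
  ring

/-- the coefficient extraction map -/
noncomputable def coeffMap (n : ℕ) (f : Fin (2 * n) → Circ) : PtAux n :=
  (((Pf (2 * n) f).coeff n).re / 2,
   fun k => ((Pf (2 * n) f).coeff (n + k + 1)).re,
   fun k => -((Pf (2 * n) f).coeff (n + k + 1)).im)

lemma prod_compl_eq_inv {m : ℕ} (g : Fin m → ℂ) (hg : ∏ j, g j = 1) (A : Finset (Fin m)) :
    ∏ i ∈ Aᶜ, g i = (∏ i ∈ A, g i)⁻¹ := by
  apply eq_inv_of_mul_eq_one_left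
  rw [mul_comm, Finset.prod_mul_prod_compl A g, hg]

lemma Pf_coeff_rev {m : ℕ} (hm : Even m) (f : Fin m → Circ)
    (hf : ∏ j, ee (f j) = 1) {k : ℕ} (hk : k ≤ m) :
    (Pf m f).coeff (m - k) = (starRingEnd ℂ) ((Pf m f).coeff k) := by
  rw [Pf_coeff m f hk, Pf_coeff m f (Nat.sub_le m k)]
  rw [map_mul, map_pow, map_neg, map_one, map_sum]
  have hconj : ∀ A : Finset (Fin m),
      (starRingEnd ℂ) (∏ i ∈ A, ee (f i)) = ∏ i ∈ Aᶜ, ee (f i) := by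
    intro A
    rw [map_prod]
    have h1 : ∏ i ∈ A, (starRingEnd ℂ) (ee (f i)) = (∏ i ∈ A, ee (f i))⁻¹ := by
      rw [← Finset.prod_inv_distrib]; exact Finset.prod_congr rfl fun i _ => ee_conj _
    rw [h1, ← prod_compl_eq_inv (fun j => ee (f j)) hf A]
  rw [Finset.sum_congr rfl (fun A _ => hconj A)]
  have hbij : ∑ A ∈ Finset.powersetCard (m - k) (Finset.univ : Finset (Fin m)),
      ∏ i ∈ Aᶜ, ee (f i)
      = ∑ B ∈ Finset.powersetCard (m - (m - k)) (Finset.univ : Finset (Fin m)),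
        ∏ i ∈ B, ee (f i) := by
    apply Finset.sum_nbij' (i := fun A => Aᶜ) (j := fun B => Bᶜ)
    · intro A hA
      rw [Finset.mem_powersetCard_univ] at hA ⊢
      rw [Finset.card_compl, hA]; simp
    · intro B hB
      rw [Finset.mem_powersetCard_univ] at hB ⊢
      rw [Finset.card_compl, hB]; simp; omega
    · intro A _; simp
    · intro B _; simp
    · intro A _; rfl
  rw [hbij, show m - (m - k) = k by omega]
  have hsign : ((-1 : ℂ)) ^ (m - k) = (-1) ^ k := by
    rcases Nat.even_or_odd k with he | ho
    · rw [he.neg_one_pow, (by rw [Nat.even_sub hk]; simp [hm, he] : Even (m - k)).neg_one_pow]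
    · rw [ho.neg_one_pow, (by rw [Nat.odd_sub hk]; simp [hm, ho, ← Nat.not_even_iff_odd]; exact Nat.not_even_iff_odd.mpr ho
        : Odd (m - k)).neg_one_pow]
  rw [hsign]

lemma Qpoly_coeffMap {n : ℕ} (hn : 1 ≤ n) (f : Fin (2 * n) → Circ)
    (hf : ∏ j, ee (f j) = 1) :
    Qpoly n (coeffMap n f) = Pf (2 * n) f := by
  have hrev : ∀ k, k ≤ 2 * n →
      (Pf (2 * n) f).coeff (2 * n - k) = (starRingEnd ℂ) ((Pf (2 * n) f).coeff k) :=
    fun k hk => Pf_coeff_rev (even_two_mul n) f hf hk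
  have hcoeff2n : (Pf (2 * n) f).coeff (2 * n) = 1 := by
    have := (Pf_monic (2 * n) f).coeff_natDegree
    rwa [Pf_natDegree] at this
  have haux : ∀ l : ℕ, 1 ≤ l → l ≤ n - 1 →
      ccc n (coeffMap n f) l = (Pf (2 * n) f).coeff (n + l) := by
    intro l h1 h2
    rw [ccc, dif_pos (show l - 1 < n - 1 by omega)]
    show ((((Pf (2*n) f).coeff (n + (l-1) + 1)).re : ℂ))
        - Complex.I * ((-(((Pf (2*n) f).coeff (n + (l-1) + 1)).im) : ℝ) : ℂ) = _
    rw [show n + (l - 1) + 1 = n + l by omega]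
    push_cast
    rw [mul_neg, sub_neg_eq_add, mul_comm Complex.I]
    exact Complex.re_add_im _
  ext k
  rw [coeff_Qpoly]
  by_cases hk : k < 2 * n + 1
  · rw [if_pos hk]
    rcases lt_trichotomy k n with hlt | heq | hgt
    · -- k < n
      rw [bb, if_neg (by omega), if_neg (by omega)]
      rcases Nat.eq_zero_or_pos k with rfl | hkpos
      · rw [Nat.sub_zero, ccc, dif_neg (by omega), map_one]
        have h0 := hrev (2 * n) le_rfl
        rw [Nat.sub_self, hcoeff2n, map_one] at h0
        exact h0.symm
      · rw [haux (n - k) (by omega) (by omega), show n + (n - k) = 2 * n - k by omega,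
          hrev k (by omega), Complex.conj_conj]
    · -- k = n
      rw [heq, bb, if_pos rfl]
      have hreal : ((((Pf (2 * n) f).coeff n).re : ℂ)) = (Pf (2 * n) f).coeff n := by
        rw [← Complex.conj_eq_iff_re]
        have h0 := hrev n (by omega)
        rw [show 2 * n - n = n by omega] at h0
        exact h0.symm
      show (2 : ℂ) * ((((Pf (2*n) f).coeff n).re / 2 : ℝ) : ℂ) = _
      push_cast
      rw [mul_div_cancel₀ _ (two_ne_zero)]
      exact hreal
    · -- n < k
      rw [bb, if_neg (by omega), if_pos hgt]
      rcases eq_or_lt_of_le (show k ≤ 2 * n by omega) with heq2 | hlt2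
      · rw [heq2, show 2 * n - n = n by omega, ccc, dif_neg (by omega)]
        exact hcoeff2n.symm
      · rw [haux (k - n) (by omega) (by omega), show n + (k - n) = k by omega]
  · rw [if_neg hk]
    symm
    apply Polynomial.coeff_eq_zero_of_natDegree_lt
    rw [Pf_natDegree]; omega

lemma Pf_eval (m : ℕ) (f : Fin m → Circ) (w : ℂ) :
    (Pf m f).eval w = ∏ j, (w - ee (f j)) := by
  rw [Pf, Polynomial.eval_prod]
  simp

/-- existence of a permutation matching two tuples with the same value multiset -/
lemma exists_perm_of_map_eq {X : Type*} {m : ℕ} {f g : Fin m → X}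
    (h : Multiset.map f Finset.univ.val = Multiset.map g Finset.univ.val) :
    ∃ σ : Equiv.Perm (Fin m), f ∘ σ = g := by
  classical
  have hcard : ∀ c : X, Fintype.card {b // g b = c} = Fintype.card {a // f a = c} := by
    intro c
    rw [Fintype.card_subtype, Fintype.card_subtype]
    have hc := congrArg (Multiset.count c) h
    rw [Multiset.count_map, Multiset.count_map] at hc
    have key : ∀ t : Fin m → X, (Finset.univ.filter (fun a => t a = c)).card
        = Multiset.card (Multiset.filter (fun a => c = t a) Finset.univ.val) := by
      intro t
      rw [Finset.card, Finset.filter_val]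
      congr 1
      exact Multiset.filter_congr (fun x _ => by constructor <;> exact Eq.symm)
    rw [key, key, hc]
  have e : ∀ c : X, {a // g a = c} ≃ {b // f b = c} := fun c => Fintype.equivOfCardEq (hcard c)
  refine ⟨Equiv.ofFiberEquiv (f := g) (g := f) e, funext fun a => ?_⟩
  exact Equiv.ofFiberEquiv_map e a

lemma coeffMap_mem_Omega {n : ℕ} (hn : 1 ≤ n) (f : Fin (2 * n) → Circ)
    (hf : ∏ j, ee (f j) = 1) : coeffMap n f ∈ OmegaSet n := by
  intro z hz
  rw [fsTrig_eq hn _ z, Qpoly_coeffMap hn f hf] at hz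
  have h1 : (Pf (2 * n) f).eval (Complex.exp (Complex.I * z)) = 0 := by
    rcases mul_eq_zero.mp hz with h | h
    · rcases mul_eq_zero.mp h with h' | h'
      · norm_num at h'
      · exact absurd h' (Complex.exp_ne_zero _)
    · exact h
  rw [Pf_eval] at h1
  obtain ⟨j, _, hj⟩ := Finset.prod_eq_zero_iff.mp h1
  rw [sub_eq_zero] at hj
  have habs : ‖Complex.exp (Complex.I * z)‖ = 1 := by rw [hj, ee_abs]
  rw [Complex.norm_exp] at habs
  have hre : (Complex.I * z).re = -z.im := by simp
  rw [hre] at habs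
  rw [← Real.exp_zero] at habs
  have := Real.exp_eq_exp.mp habs
  linarith

lemma prod_fin_list {M : Type*} [CommMonoid M] (g : ℂ → M) (L : List ℂ) {m : ℕ}
    (h : L.length = m) :
    ∏ j : Fin m, g (L.get (Fin.cast h.symm j)) = (L.map g).prod := by
  subst h
  rw [← List.ofFn_getElem_eq_map L g, List.prod_ofFn]
  exact Finset.prod_congr rfl fun j _ => by simp

lemma exists_tuple {n : ℕ} (hn : 1 ≤ n) (p : PtAux n) (hp : p ∈ OmegaSet n) :
    ∃ f : Fin (2 * n) → Circ,
      (∏ j, ee (f j) = 1) ∧ Qpoly n p = Pf (2 * n) f ∧ coeffMap n f = p := by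
  classical
  have hQmonic := Qpoly_monic hn p
  have hQne : Qpoly n p ≠ 0 := hQmonic.ne_zero
  have hsplits : (Qpoly n p).Splits := IsAlgClosed.splits _
  have hcard : Multiset.card (Qpoly n p).roots = 2 * n := by
    rw [(Polynomial.splits_iff_card_roots).mp hsplits, Qpoly_natDegree hn]
  -- each root has modulus one
  have habs : ∀ r ∈ (Qpoly n p).roots, ‖r‖ = 1 := by
    intro r hr
    have hroot : (Qpoly n p).eval r = 0 := by
      rw [Polynomial.mem_roots hQne] at hr; exact hr
    have hrne : r ≠ 0 := by
      intro h0
      rw [h0, ← Polynomial.coeff_zero_eq_eval_zero, coeff_Qpoly, if_pos (by omega),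
        bb_zero hn] at hroot
      exact one_ne_zero hroot
    have hexp : Complex.exp (Complex.I * (-Complex.I * Complex.log r)) = r := by
      rw [show Complex.I * (-Complex.I * Complex.log r) = (Complex.I * -Complex.I)
        * Complex.log r by ring]
      simp [Complex.exp_log hrne]
    have hz : fsTrig n p (-Complex.I * Complex.log r) = 0 := by
      rw [fsTrig_eq hn p, hexp, hroot, mul_zero]
    have him := hp _ hz
    have heq : (-Complex.I * Complex.log r).im = -(Complex.log r).re := by simp
    rw [heq, Complex.log_re] at him
    have hlog : Real.log ‖r‖ = 0 := by linarith
    rcases Real.log_eq_zero.mp hlog with h | h | h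
    · exact absurd h (norm_ne_zero_iff.mpr hrne)
    · exact h
    · nlinarith [norm_nonneg r]
  -- index the roots
  have hlen : (Qpoly n p).roots.toList.length = 2 * n := by
    rw [Multiset.length_toList, hcard]
  let L : List ℂ := (Qpoly n p).roots.toList
  let r : Fin (2 * n) → ℂ := fun j => L.get (Fin.cast hlen.symm j)
  have hrmem : ∀ j, r j ∈ (Qpoly n p).roots := fun j =>
    Multiset.mem_toList.mp (L.get_mem _)
  let f : Fin (2 * n) → Circ := fun j => ((Complex.arg (r j) : ℝ) : Circ)
  have hee : ∀ j, ee (f j) = r j := by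
    intro j
    show ee ((Complex.arg (r j) : ℝ) : Circ) = r j
    rw [ee_coe]
    have := Complex.norm_mul_exp_arg_mul_I (r j)
    rwa [habs _ (hrmem j), Complex.ofReal_one, one_mul] at this
  -- the product formula
  have hQprod : Qpoly n p = ((Qpoly n p).roots.map (fun a => X - C a)).prod :=
    hsplits.eq_prod_roots_of_monic hQmonic
  have hPf : Pf (2 * n) f = Qpoly n p := by
    rw [hQprod, Pf]
    have h1 : (Qpoly n p).roots = (L : Multiset ℂ) := (Multiset.coe_toList _).symm
    rw [h1, Multiset.map_coe, Multiset.prod_coe]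
    rw [← prod_fin_list (fun a => X - C a) L hlen]
    exact Finset.prod_congr rfl fun j _ => by rw [hee]
  -- total product of the roots is 1
  have hprod1 : ∏ j, ee (f j) = 1 := by
    have hev0 : (Qpoly n p).eval 0 = 1 := by
      rw [← Polynomial.coeff_zero_eq_eval_zero, coeff_Qpoly, if_pos (by omega), bb_zero hn]
    rw [← hPf, Pf_eval] at hev0
    have : ∏ j : Fin (2 * n), ((0 : ℂ) - ee (f j))
        = (-1 : ℂ) ^ (2 * n) * ∏ j, ee (f j) := by
      calc ∏ j : Fin (2 * n), ((0:ℂ) - ee (f j))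
          = ∏ j : Fin (2 * n), ((-1) * ee (f j)) :=
            Finset.prod_congr rfl fun j _ => by ring
        _ = ((-1 : ℂ) ^ (2 * n)) * ∏ j, ee (f j) := by
            rw [Finset.prod_mul_distrib, Finset.prod_const, Finset.card_fin]
    rw [this, (even_two_mul n).neg_one_pow, one_mul] at hev0
    exact hev0
  refine ⟨f, hprod1, hPf.symm, ?_⟩
  rw [coeffMap, hPf]
  have hponent : ∀ k : Fin (n - 1), (Qpoly n p).coeff (n + k + 1)
      = (p.2.1 k : ℂ) - Complex.I * (p.2.2 k : ℂ) := by
    intro k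
    rw [coeff_Qpoly, if_pos (by have := k.2; omega), bb_high]
  refine Prod.ext ?_ (Prod.ext ?_ ?_)
  · show ((Qpoly n p).coeff n).re / 2 = p.1
    rw [coeff_Qpoly, if_pos (by omega), bb_n]
    simp
  · funext k
    show ((Qpoly n p).coeff (n + k + 1)).re = p.2.1 k
    rw [hponent k]
    simp
  · funext k
    show -((Qpoly n p).coeff (n + k + 1)).im = p.2.2 k
    rw [hponent k]
    simp

lemma continuous_Pf_coeff (m k : ℕ) (hk : k ≤ m) :
    Continuous (fun f : Fin m → Circ => (Pf m f).coeff k) := by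
  have h : (fun f : Fin m → Circ => (Pf m f).coeff k)
      = fun f => (-1) ^ (m - k) * ∑ A ∈ Finset.powersetCard (m - k) Finset.univ,
          ∏ i ∈ A, ee (f i) :=
    funext fun f => Pf_coeff m f hk
  rw [h]
  exact continuous_const.mul (continuous_finset_sum _ fun A _ =>
    continuous_finset_prod _ fun i _ => ee_cont.comp (continuous_apply i))

lemma continuous_coeffMap (n : ℕ) (hn : 1 ≤ n) : Continuous (coeffMap n) := by
  refine Continuous.prodMk ?_ (Continuous.prodMk ?_ ?_)
  · exact (Complex.continuous_re.comp (continuous_Pf_coeff (2 * n) n (by omega))).div_const 2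
  · exact continuous_pi fun k => Complex.continuous_re.comp
      (continuous_Pf_coeff (2 * n) (n + k + 1) (by have := k.2; omega))
  · exact continuous_pi fun k => (Complex.continuous_im.comp
      (continuous_Pf_coeff (2 * n) (n + k + 1) (by have := k.2; omega))).neg

lemma coeffMap_invariant (n : ℕ) (f g : Fin (2 * n) → Circ)
    (h : (symSetoid Circ (2 * n)).r f g) : coeffMap n f = coeffMap n g := by
  obtain ⟨σ, rfl⟩ := h
  have hPf : Pf (2 * n) (f ∘ σ) = Pf (2 * n) f := by
    rw [Pf, Pf]
    exact Equiv.prod_comp σ (fun j => X - C (ee (f j)))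
  rw [coeffMap, coeffMap, hPf]

/-- The root map `𝐳`, sending a coefficient vector `s ∈ Ω` to the
unordered collection of the `2n` roots of `f_s`, gives a homeomorphism (in particular a
bijection) from `Ω` onto `Sym^{2n}₀(S¹)`, the set of unordered `2n`-tuples of points of
`S¹` whose sum lies in `2πℤ`.  The roots are pinned down via the factorization
`f_s(z) = c e^{-inz} ∏ⱼ (e^{iz} − e^{iαⱼ})`. -/
theorem omega_homeo_sym0 (n : ℕ) (hn : 1 ≤ n) :
    ∃ F : ↥(OmegaSet n) ≃ₜ {q : SymProd Circ (2 * n) // symSum (2 * n) q = 0},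
      ∀ p : ↥(OmegaSet n), ∃ α : Fin (2 * n) → ℝ,
        ((F p).1 = Quotient.mk (symSetoid Circ (2 * n)) (fun j => ((α j : ℝ) : Circ))) ∧
        ∃ c : ℂ, c ≠ 0 ∧ ∀ z : ℂ,
          fsTrig n (p : ℝ × (Fin (n - 1) → ℝ) × (Fin (n - 1) → ℝ)) z =
            c * Complex.exp (-(n : ℂ) * Complex.I * z) *
              ∏ j : Fin (2 * n),
                (Complex.exp (Complex.I * z) - Complex.exp (Complex.I * (α j : ℂ))) := by
  classical
  haveI : Fact (0 < 2 * Real.pi) := ⟨by positivity⟩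
  -- sum zero iff product one
  have hsum_prod : ∀ f : Fin (2 * n) → Circ, (∑ j, f j) = 0 ↔ ∏ j, ee (f j) = 1 := by
    intro f
    constructor
    · intro h; rw [← ee_sum, h, ee_zero]
    · intro h; apply ee_inj; rw [ee_sum, h, ee_zero]
  -- the inverse map G
  let G0 : SymProd Circ (2 * n) → PtAux n := Quotient.lift (coeffMap n) (coeffMap_invariant n)
  have hmemG : ∀ q : {q : SymProd Circ (2 * n) // symSum (2 * n) q = 0},
      G0 q.1 ∈ OmegaSet n := by
    rintro ⟨q, hq⟩
    obtain ⟨f, rfl⟩ := Quotient.exists_rep q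
    have hf : ∏ j, ee (f j) = 1 := (hsum_prod f).mp hq
    exact coeffMap_mem_Omega hn f hf
  let G : {q : SymProd Circ (2 * n) // symSum (2 * n) q = 0} → ↥(OmegaSet n) :=
    fun q => ⟨G0 q.1, hmemG q⟩
  -- G is bijective
  have hinj : Function.Injective G := by
    rintro ⟨q1, hq1⟩ ⟨q2, hq2⟩ h
    obtain ⟨f1, rfl⟩ := Quotient.exists_rep q1
    obtain ⟨f2, rfl⟩ := Quotient.exists_rep q2
    have hf1 : ∏ j, ee (f1 j) = 1 := (hsum_prod f1).mp hq1
    have hf2 : ∏ j, ee (f2 j) = 1 := (hsum_prod f2).mp hq2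
    have hcm : coeffMap n f1 = coeffMap n f2 := congrArg Subtype.val h
    have hPf : Pf (2 * n) f1 = Pf (2 * n) f2 := by
      rw [← Qpoly_coeffMap hn f1 hf1, ← Qpoly_coeffMap hn f2 hf2, hcm]
    have hroots := congrArg Polynomial.roots hPf
    rw [Pf_roots, Pf_roots] at hroots
    have hmap : Multiset.map f1 Finset.univ.val = Multiset.map f2 Finset.univ.val := by
      apply Multiset.map_injective ee_inj
      rw [Multiset.map_map, Multiset.map_map]
      exact hroots
    obtain ⟨σ, hσ⟩ := exists_perm_of_map_eq hmap
    exact Subtype.ext (Quotient.sound ⟨σ, hσ⟩)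
  have hsurj : Function.Surjective G := by
    rintro ⟨p, hp⟩
    obtain ⟨f, hf1, _, hf3⟩ := exists_tuple hn p hp
    refine ⟨⟨Quotient.mk _ f, (hsum_prod f).mpr hf1⟩, ?_⟩
    exact Subtype.ext hf3
  -- G is continuous
  have hG0c : Continuous G0 := (continuous_coeffMap n hn).quotient_lift _
  have hGc : Continuous G := Continuous.subtype_mk (hG0c.comp continuous_subtype_val) _
  -- compactness of the source
  have hsymc : Continuous (symSum (2 * n)) :=
    Continuous.quotient_lift (continuous_finset_sum _ fun i _ => continuous_apply i) _
  haveI : CompactSpace {q : SymProd Circ (2 * n) // symSum (2 * n) q = 0} :=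
    isCompact_iff_compactSpace.mp ((isClosed_singleton.preimage hsymc).isCompact)
  -- the homeomorphism
  let E : {q : SymProd Circ (2 * n) // symSum (2 * n) q = 0} ≃ ↥(OmegaSet n) :=
    Equiv.ofBijective G ⟨hinj, hsurj⟩
  let Fh : {q : SymProd Circ (2 * n) // symSum (2 * n) q = 0} ≃ₜ ↥(OmegaSet n) :=
    Continuous.homeoOfEquivCompactToT2 (f := E) hGc
  refine ⟨Fh.symm, ?_⟩
  intro p
  have hGFp : G (Fh.symm p) = p := Fh.apply_symm_apply p
  obtain ⟨f, hfq⟩ := Quotient.exists_rep (Fh.symm p).1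
  have hsum0 : (∑ j, f j) = 0 := by
    have := (Fh.symm p).2
    rw [← hfq] at this
    exact this
  have hf1 : ∏ j, ee (f j) = 1 := (hsum_prod f).mp hsum0
  have hcm : coeffMap n f = (p : PtAux n) := by
    have := congrArg Subtype.val hGFp
    rw [← this]
    show coeffMap n f = G0 (Fh.symm p).1
    rw [← hfq]
    rfl
  choose α hα using fun j => Quotient.exists_rep (f j)
  refine ⟨α, ?_, (1/2 : ℂ), by norm_num, ?_⟩
  · rw [← hfq]
    congr 1
    funext j
    exact (hα j).symm
  · intro z
    rw [← hcm, fsTrig_eq hn _ z, Qpoly_coeffMap hn f hf1, Pf_eval]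
    congr 1
    apply Finset.prod_congr rfl
    intro j _
    congr 1
    rw [show Complex.I * ((α j : ℝ) : ℂ) = ((α j : ℝ) : ℂ) * Complex.I from mul_comm _ _,
      ← ee_coe]
    exact (congrArg ee (hα j)).symm
end
end OmegaProofAux
end

section
/- Every unordered 2n-tuple of points of ℂ/2πℤ (i.e., of [0,2π) × iℝ) that is closed under complex conjugation and whose members sum to an element of 2πℤ arises as the root set of a unique trigonometric polynomial of the form f_s(α) = s₀ + Σ_{k=1}^{n−1}(s_k cos kα + s'_k sin kα) + cos nα with real coefficients s. -/
open scoped Real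

namespace TrigPolyAux

open Polynomial Complex

/-- The monic polynomial with roots `exp (I * w j)`. -/
noncomputable def Qaux (n : ℕ) (w : Fin (2 * n) → ℂ) : Polynomial ℂ :=
  ∏ j : Fin (2 * n), (X - C (Complex.exp (Complex.I * w j)))

/-- The polynomial `2 q^n f_s` written in the variable `q = e^{iz}`. -/
noncomputable def Paux (n : ℕ) (p : ℝ × (Fin (n - 1) → ℝ) × (Fin (n - 1) → ℝ)) :
    Polynomial ℂ :=
  X ^ (2 * n) + 1 + C (2 * (p.1 : ℂ)) * X ^ n +
    ∑ k : Fin (n - 1),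
      (C ((p.2.1 k : ℂ) - Complex.I * (p.2.2 k : ℂ)) * X ^ (n + ((k : ℕ) + 1)) +
       C ((p.2.1 k : ℂ) + Complex.I * (p.2.2 k : ℂ)) * X ^ (n - ((k : ℕ) + 1)))

lemma reverse_prod {ι : Type*} (s : Finset ι) (f : ι → Polynomial ℂ) :
    (∏ i ∈ s, f i).reverse = ∏ i ∈ s, (f i).reverse := by
  classical
  induction s using Finset.induction_on with
  | empty => simp [Polynomial.reverse]
  | insert _ _ h ih =>
      rw [Finset.prod_insert h, Finset.prod_insert h, Polynomial.reverse_mul_of_domain, ih]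

lemma reverse_X_sub_C {a : ℂ} (ha : a ≠ 0) :
    (X - C a).reverse = C (-a) * (X - C a⁻¹) := by
  have h1 : (X - C a : Polynomial ℂ) = C 1 * X ^ 1 + C (-a) * X ^ 0 := by
    simp; ring
  have hd : (X - C a : Polynomial ℂ).natDegree = 1 := natDegree_X_sub_C a
  rw [Polynomial.reverse, hd, h1, reflect_add, reflect_C_mul_X_pow, reflect_C_mul_X_pow]
  have r1 : revAt 1 1 = 0 := by rw [revAt_le (by norm_num)]
  have r0 : revAt 1 0 = 1 := by rw [revAt_le (by norm_num)]
  rw [r1, r0]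
  have : (C (-a) : Polynomial ℂ) * (X - C a⁻¹) = C (-a) * X - C (-a) * C a⁻¹ := by ring
  rw [this, ← C_mul]
  field_simp
  simp only [map_neg, map_one]
  ring

/-- Evaluation identity: `(Paux n p).eval (e^{iz}) = 2 e^{inz} f_s(z)`. -/
lemma eval_Paux (n : ℕ) (hn : 1 ≤ n) (p : ℝ × (Fin (n - 1) → ℝ) × (Fin (n - 1) → ℝ))
    (z : ℂ) :
    (Paux n p).eval (Complex.exp (Complex.I * z)) =
      2 * Complex.exp ((n : ℂ) * (Complex.I * z)) * fsTrig n p z := by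
  set q := Complex.exp (Complex.I * z) with hq
  have hq0 : q ≠ 0 := Complex.exp_ne_zero _
  have hpow : ∀ m : ℕ, q ^ m = Complex.exp ((m : ℂ) * (Complex.I * z)) := fun m =>
    (Complex.exp_nat_mul _ m).symm
  have hE : Complex.exp ((n : ℂ) * (Complex.I * z)) = q ^ n := (hpow n).symm
  have h2n : q ^ (2 * n) = q ^ n * q ^ n := by rw [two_mul, pow_add]
  have hcos : 2 * q ^ n * Complex.cos ((n : ℂ) * z) = q ^ n * q ^ n + 1 := by
    rw [Complex.cos, hpow n]
    have e1 : Complex.exp ((n : ℂ) * z * Complex.I) = Complex.exp ((n : ℂ) * (Complex.I * z)) := by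
      ring_nf
    have e2 : Complex.exp (-((n : ℂ) * z) * Complex.I) =
        (Complex.exp ((n : ℂ) * (Complex.I * z)))⁻¹ := by
      rw [neg_mul, Complex.exp_neg, e1]
    rw [e1, e2]
    have h0 : Complex.exp ((n : ℂ) * (Complex.I * z)) ≠ 0 := Complex.exp_ne_zero _
    field_simp
  have hS : (∑ k : Fin (n - 1),
      (((p.2.1 k : ℂ) - Complex.I * (p.2.2 k : ℂ)) * q ^ (n + ((k : ℕ) + 1)) +
       ((p.2.1 k : ℂ) + Complex.I * (p.2.2 k : ℂ)) * q ^ (n - ((k : ℕ) + 1)))) =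
      2 * q ^ n * ∑ k : Fin (n - 1), ((p.2.1 k : ℂ) * Complex.cos (((k : ℕ) + 1 : ℂ) * z) +
        (p.2.2 k : ℂ) * Complex.sin (((k : ℕ) + 1 : ℂ) * z)) := by
    rw [Finset.mul_sum]
    refine Finset.sum_congr rfl (fun k _ => ?_)
    have hk : (k : ℕ) + 1 ≤ n := by have := k.isLt; omega
    have hadd : q ^ (n + ((k : ℕ) + 1)) = q ^ n * q ^ ((k : ℕ) + 1) := pow_add q n _
    have hsub : q ^ (n - ((k : ℕ) + 1)) = q ^ n * (q ^ ((k : ℕ) + 1))⁻¹ :=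
      pow_sub₀ q hq0 hk
    have ek : Complex.exp (((k : ℕ) + 1 : ℂ) * z * Complex.I) = q ^ ((k : ℕ) + 1) := by
      rw [hpow]; push_cast; ring_nf
    have ek' : Complex.exp (-(((k : ℕ) + 1 : ℂ) * z) * Complex.I) = (q ^ ((k : ℕ) + 1))⁻¹ := by
      rw [neg_mul, Complex.exp_neg, ek]
    rw [hadd, hsub, Complex.cos, Complex.sin, ek, ek']
    have hk0 : q ^ ((k : ℕ) + 1) ≠ 0 := pow_ne_zero _ hq0
    field_simp
    ring
  rw [fsTrig, hE]
  simp only [Paux, eval_add, eval_mul, eval_pow, eval_one, eval_X, eval_C,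
    eval_finset_sum]

  rw [h2n]
  linear_combination hS - hcos



lemma coeff_Paux (n : ℕ) (p : ℝ × (Fin (n - 1) → ℝ) × (Fin (n - 1) → ℝ)) (m : ℕ) :
    (Paux n p).coeff m =
      (if m = 2 * n then 1 else 0) + (if m = 0 then 1 else 0) +
        (if m = n then 2 * (p.1 : ℂ) else 0) +
        ∑ k : Fin (n - 1),
          ((if m = n + ((k : ℕ) + 1) then ((p.2.1 k : ℂ) - Complex.I * (p.2.2 k : ℂ)) else 0) +
           (if m = n - ((k : ℕ) + 1) then ((p.2.1 k : ℂ) + Complex.I * (p.2.2 k : ℂ)) else 0)) := by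
  simp only [Paux, coeff_add, finset_sum_coeff, coeff_C_mul, coeff_X_pow, coeff_one,
    mul_ite, mul_one, mul_zero]

lemma Paux_coeff_high (n : ℕ) (hn : 1 ≤ n) (p : ℝ × (Fin (n - 1) → ℝ) × (Fin (n - 1) → ℝ))
    (m : ℕ) (hm : 2 * n < m) : (Paux n p).coeff m = 0 := by
  rw [coeff_Paux, if_neg (by omega), if_neg (by omega), if_neg (by omega),
    Finset.sum_eq_zero]
  · ring
  · intro k _
    have hk := k.isLt
    rw [if_neg (by omega), if_neg (by omega)]
    ring

lemma Paux_coeff_top (n : ℕ) (hn : 1 ≤ n) (p : ℝ × (Fin (n - 1) → ℝ) × (Fin (n - 1) → ℝ)) :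
    (Paux n p).coeff (2 * n) = 1 := by
  rw [coeff_Paux, if_pos rfl, if_neg (by omega), if_neg (by omega), Finset.sum_eq_zero]
  · ring
  · intro k _
    have hk := k.isLt
    rw [if_neg (by omega), if_neg (by omega)]
    ring

lemma Paux_coeff_zero (n : ℕ) (hn : 1 ≤ n) (p : ℝ × (Fin (n - 1) → ℝ) × (Fin (n - 1) → ℝ)) :
    (Paux n p).coeff 0 = 1 := by
  rw [coeff_Paux, if_neg (by omega), if_pos rfl, if_neg (by omega), Finset.sum_eq_zero]
  · ring
  · intro k _
    have hk := k.isLt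
    rw [if_neg (by omega), if_neg (by omega)]
    ring

lemma Paux_coeff_n (n : ℕ) (hn : 1 ≤ n) (p : ℝ × (Fin (n - 1) → ℝ) × (Fin (n - 1) → ℝ)) :
    (Paux n p).coeff n = 2 * (p.1 : ℂ) := by
  rw [coeff_Paux, if_neg (by omega), if_neg (by omega), if_pos rfl, Finset.sum_eq_zero]
  · ring
  · intro k _
    have hk := k.isLt
    rw [if_neg (by omega), if_neg (by omega)]
    ring

lemma Paux_coeff_upper (n : ℕ) (hn : 1 ≤ n)
    (p : ℝ × (Fin (n - 1) → ℝ) × (Fin (n - 1) → ℝ)) (j : Fin (n - 1)) :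
    (Paux n p).coeff (n + ((j : ℕ) + 1)) = (p.2.1 j : ℂ) - Complex.I * (p.2.2 j : ℂ) := by
  have hj := j.isLt
  rw [coeff_Paux, if_neg (by omega), if_neg (by omega), if_neg (by omega),
    Finset.sum_eq_single j]
  · have hb := j.isLt
    rw [if_pos rfl, if_neg (by omega)]
    ring
  · intro k _ hkj
    have hk := k.isLt
    have hne : (k : ℕ) ≠ (j : ℕ) := fun hval => hkj (Fin.ext hval)
    rw [if_neg (by omega), if_neg (by omega)]
    ring
  · intro h
    exact absurd (Finset.mem_univ j) h

lemma Paux_coeff_lower (n : ℕ) (hn : 1 ≤ n)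
    (p : ℝ × (Fin (n - 1) → ℝ) × (Fin (n - 1) → ℝ)) (j : Fin (n - 1)) :
    (Paux n p).coeff (n - ((j : ℕ) + 1)) = (p.2.1 j : ℂ) + Complex.I * (p.2.2 j : ℂ) := by
  have hj := j.isLt
  rw [coeff_Paux, if_neg (by omega), if_neg (by omega), if_neg (by omega),
    Finset.sum_eq_single j]
  · rw [if_neg (by omega), if_pos rfl]
    ring
  · intro k _ hkj
    have hk := k.isLt
    have hne : (k : ℕ) ≠ (j : ℕ) := fun hval => hkj (Fin.ext hval)
    rw [if_neg (by omega), if_neg (by omega)]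
    ring
  · intro h
    exact absurd (Finset.mem_univ j) h

lemma Qaux_monic (n : ℕ) (w : Fin (2 * n) → ℂ) : (Qaux n w).Monic :=
  monic_prod_of_monic _ _ fun j _ => monic_X_sub_C _

lemma Qaux_natDegree (n : ℕ) (w : Fin (2 * n) → ℂ) : (Qaux n w).natDegree = 2 * n := by
  rw [Qaux, natDegree_prod _ _ (fun j _ => X_sub_C_ne_zero _)]
  simp [natDegree_X_sub_C]

lemma Qaux_prod_roots (n : ℕ) (w : Fin (2 * n) → ℂ)
    (hsum : ∃ m : ℤ, (∑ j, w j) = ((2 * Real.pi * (m : ℝ) : ℝ) : ℂ)) :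
    ∏ j, Complex.exp (Complex.I * w j) = 1 := by
  obtain ⟨m, hm⟩ := hsum
  rw [← Complex.exp_sum, ← Finset.mul_sum, hm]
  have : Complex.I * ((2 * Real.pi * (m : ℝ) : ℝ) : ℂ) = (m : ℂ) * (2 * Real.pi * Complex.I) := by
    push_cast
    ring
  rw [this]
  exact_mod_cast Complex.exp_int_mul_two_pi_mul_I m

lemma Qaux_coeff_zero' (n : ℕ) (w : Fin (2 * n) → ℂ)
    (hsum : ∃ m : ℤ, (∑ j, w j) = ((2 * Real.pi * (m : ℝ) : ℝ) : ℂ)) :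
    (Qaux n w).coeff 0 = 1 := by
  rw [coeff_zero_eq_eval_zero, Qaux, eval_prod]
  simp only [eval_sub, eval_X, eval_C, zero_sub]
  calc (∏ j, -Complex.exp (Complex.I * w j))
      = ∏ j, ((-1) * Complex.exp (Complex.I * w j)) := by simp
    _ = (∏ _j : Fin (2 * n), (-1 : ℂ)) * ∏ j, Complex.exp (Complex.I * w j) :=
        Finset.prod_mul_distrib
    _ = 1 := by
        rw [Qaux_prod_roots n w hsum, Finset.prod_const]
        simp only [Finset.card_univ, Fintype.card_fin, mul_one]
        exact Even.neg_one_pow (even_two_mul n)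

lemma Qaux_symm (n : ℕ) (w : Fin (2 * n) → ℂ)
    (hconj : ∃ σ : Equiv.Perm (Fin (2 * n)), ∀ j, w (σ j) = (starRingEnd ℂ) (w j))
    (hsum : ∃ m : ℤ, (∑ j, w j) = ((2 * Real.pi * (m : ℝ) : ℝ) : ℂ)) :
    ∀ k, k ≤ 2 * n →
      (Qaux n w).coeff k = (starRingEnd ℂ) ((Qaux n w).coeff (2 * n - k)) := by
  obtain ⟨σ, hσ⟩ := hconj
  set u : Fin (2 * n) → ℂ := fun j => Complex.exp (Complex.I * w j) with hu
  have hu0 : ∀ j, u j ≠ 0 := fun j => Complex.exp_ne_zero _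
  have huσ : ∀ j, u (σ j) = ((starRingEnd ℂ) (u j))⁻¹ := by
    intro j
    rw [hu]
    simp only
    rw [hσ j, ← Complex.exp_conj, ← Complex.exp_neg]
    congr 1
    simp [Complex.conj_I]
  have hmap : (Qaux n w).map (starRingEnd ℂ) =
      ∏ j, (X - C ((starRingEnd ℂ) (u j))) := by
    rw [Qaux, Polynomial.map_prod]
    simp
    rfl
  have hprodu : ∏ j, u j = 1 := Qaux_prod_roots n w hsum
  have hrev : ((Qaux n w).map (starRingEnd ℂ)).reverse = Qaux n w := by
    rw [hmap, reverse_prod]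
    rw [Finset.prod_congr rfl (fun j _ => reverse_X_sub_C (by simpa using hu0 j))]
    have hinv : ∀ j, ((starRingEnd ℂ) (u j))⁻¹ = u (σ j) := fun j => (huσ j).symm
    rw [Finset.prod_congr rfl (fun j (_ : j ∈ Finset.univ) => by rw [hinv j])]
    rw [Finset.prod_mul_distrib, Equiv.prod_comp σ (fun j => X - C (u j)),
      ← map_prod (Polynomial.C : ℂ →+* Polynomial ℂ) (fun j => -(starRingEnd ℂ) (u j))
        Finset.univ]
    have : (∏ j, -(starRingEnd ℂ) (u j)) = 1 := by
      calc (∏ j, -(starRingEnd ℂ) (u j))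
          = (∏ _j : Fin (2 * n), (-1 : ℂ)) * ∏ j, (starRingEnd ℂ) (u j) := by
            rw [← Finset.prod_mul_distrib]; simp
        _ = 1 := by
            rw [← map_prod (starRingEnd ℂ) u Finset.univ, hprodu, Finset.prod_const]
            simp only [Finset.card_univ, Fintype.card_fin, map_one, mul_one]
            exact Even.neg_one_pow (even_two_mul n)
    rw [this, map_one, one_mul, Qaux]
  intro k hk
  have hdeg : ((Qaux n w).map (starRingEnd ℂ)).natDegree = 2 * n := by
    rw [natDegree_map, Qaux_natDegree]
  conv_lhs => rw [← hrev]
  rw [coeff_reverse, hdeg, revAt_le hk, coeff_map]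

lemma fact_iff (n : ℕ) (hn : 1 ≤ n) (w : Fin (2 * n) → ℂ) (c : ℂ)
    (p : ℝ × (Fin (n - 1) → ℝ) × (Fin (n - 1) → ℝ)) :
    (∀ z : ℂ, fsTrig n p z = c * Complex.exp (-(n : ℂ) * Complex.I * z) *
        ∏ j : Fin (2 * n),
          (Complex.exp (Complex.I * z) - Complex.exp (Complex.I * w j)))
      ↔ Paux n p = C (2 * c) * Qaux n w := by
  constructor
  · intro h
    have key : ∀ q : ℂ, q ≠ 0 → (Paux n p - C (2 * c) * Qaux n w).IsRoot q := by
      intro q hq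
      set z : ℂ := -(Complex.I * Complex.log q) with hzdef
      have hz : Complex.exp (Complex.I * z) = q := by
        rw [hzdef, show Complex.I * -(Complex.I * Complex.log q) = Complex.log q by
          rw [mul_neg, ← mul_assoc, Complex.I_mul_I]; ring]
        exact Complex.exp_log hq
      have h1 := eval_Paux n hn p z
      rw [hz] at h1
      have h2 := h z
      rw [hz] at h2
      have hcancel : Complex.exp ((n : ℂ) * (Complex.I * z)) *
          Complex.exp (-(n : ℂ) * Complex.I * z) = 1 := by
        rw [← Complex.exp_add, show (n : ℂ) * (Complex.I * z) + -(n : ℂ) * Complex.I * z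
          = 0 by ring, Complex.exp_zero]
      simp only [IsRoot, eval_sub, eval_mul, eval_C, Qaux, eval_prod, eval_sub, eval_X]
      linear_combination h1 + 2 * Complex.exp ((n : ℂ) * (Complex.I * z)) * h2 +
        2 * c * (∏ j, (q - Complex.exp (Complex.I * w j))) * hcancel
    have hinf : {x : ℂ | (Paux n p - C (2 * c) * Qaux n w).IsRoot x}.Infinite := by
      apply Set.Infinite.mono _ (Set.Finite.infinite_compl (Set.finite_singleton (0 : ℂ)))
      intro q hq
      exact key q hq
    have := Polynomial.eq_zero_of_infinite_isRoot _ hinf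
    exact sub_eq_zero.mp this
  · intro h z
    have h1 := eval_Paux n hn p z
    rw [h] at h1
    simp only [eval_mul, eval_C, Qaux, eval_prod, eval_sub, eval_X] at h1
    have hE : Complex.exp ((n : ℂ) * (Complex.I * z)) ≠ 0 := Complex.exp_ne_zero _
    have hcancel : Complex.exp ((n : ℂ) * (Complex.I * z)) *
        Complex.exp (-(n : ℂ) * Complex.I * z) = 1 := by
      rw [← Complex.exp_add, show (n : ℂ) * (Complex.I * z) + -(n : ℂ) * Complex.I * z
        = 0 by ring, Complex.exp_zero]
    apply mul_left_cancel₀ (mul_ne_zero two_ne_zero hE)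
    linear_combination -h1 - 2 * c *
      (∏ j, (Complex.exp (Complex.I * z) - Complex.exp (Complex.I * w j))) * hcancel

end TrigPolyAux

open TrigPolyAux Polynomial in
theorem exists_unique_trig_poly_of_roots (n : ℕ) (hn : 1 ≤ n) (w : Fin (2 * n) → ℂ)
    (hstrip : ∀ j, (w j).re ∈ Set.Ico 0 (2 * Real.pi))
    (hconj : ∃ σ : Equiv.Perm (Fin (2 * n)), ∀ j, w (σ j) = (starRingEnd ℂ) (w j))
    (hsum : ∃ m : ℤ, (∑ j, w j) = ((2 * Real.pi * (m : ℝ) : ℝ) : ℂ)) :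
    ∃! p : ℝ × (Fin (n - 1) → ℝ) × (Fin (n - 1) → ℝ),
      ∃ c : ℂ, c ≠ 0 ∧ ∀ z : ℂ,
        fsTrig n p z = c * Complex.exp (-(n : ℂ) * Complex.I * z) *
          ∏ j : Fin (2 * n),
            (Complex.exp (Complex.I * z) - Complex.exp (Complex.I * w j)) := by
  classical
  set Q := Qaux n w with hQ
  have hdeg : Q.natDegree = 2 * n := Qaux_natDegree n w
  have hmonic : Q.Monic := Qaux_monic n w
  have htop : Q.coeff (2 * n) = 1 := by
    have := hmonic.coeff_natDegree
    rwa [hdeg] at this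
  have hzero : Q.coeff 0 = 1 := Qaux_coeff_zero' n w hsum
  have hsymm := Qaux_symm n w hconj hsum
  -- the candidate coefficient vector
  set p₀ : ℝ × (Fin (n - 1) → ℝ) × (Fin (n - 1) → ℝ) :=
    ((Q.coeff n).re / 2, fun k => (Q.coeff (n + ((k : ℕ) + 1))).re,
      fun k => -((Q.coeff (n + ((k : ℕ) + 1))).im)) with hp₀
  have hnreal : Q.coeff n = ((Q.coeff n).re : ℂ) := by
    have := hsymm n (by omega)
    rw [show 2 * n - n = n by omega] at this
    exact ((Complex.conj_eq_iff_re).mp this.symm).symm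
  have hPQ : Paux n p₀ = Q := by
    apply Polynomial.ext
    intro m
    by_cases hhigh : 2 * n < m
    · rw [Paux_coeff_high n hn p₀ m hhigh, Polynomial.coeff_eq_zero_of_natDegree_lt]
      omega
    push_neg at hhigh
    by_cases hm2n : m = 2 * n
    · rw [hm2n, Paux_coeff_top n hn p₀, htop]
    by_cases hmn : m = n
    · rw [hmn, Paux_coeff_n n hn p₀]
      conv_rhs => rw [hnreal]
      rw [hp₀]
      push_cast
      ring
    by_cases hm0 : m = 0
    · rw [hm0, Paux_coeff_zero n hn p₀, hzero]
    by_cases hlt : n < m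
    · set j : Fin (n - 1) := ⟨m - n - 1, by omega⟩ with hj
      have hmj : m = n + ((j : ℕ) + 1) := by rw [hj]; simp; omega
      rw [hmj, Paux_coeff_upper n hn p₀]
      have := Complex.re_add_im (Q.coeff (n + ((j : ℕ) + 1)))
      rw [hp₀]
      push_cast
      linear_combination this
    · push_neg at hlt
      set j : Fin (n - 1) := ⟨n - m - 1, by omega⟩ with hj
      have hmj : m = n - ((j : ℕ) + 1) := by rw [hj]; simp; omega
      have hmj' : n + ((j : ℕ) + 1) = 2 * n - m := by rw [hj]; simp; omega
      rw [hmj, Paux_coeff_lower n hn p₀, hp₀]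
      have hs := hsymm m (by omega)
      rw [← hmj'] at hs
      rw [← hmj, hs]
      have := Complex.re_add_im (Q.coeff (n + ((j : ℕ) + 1)))
      apply Complex.ext <;> simp <;> rfl
  refine ⟨p₀, ⟨1 / 2, by norm_num, ?_⟩, ?_⟩
  · rw [fact_iff n hn w (1 / 2) p₀]
    rw [show (2 : ℂ) * (1 / 2) = 1 by norm_num, map_one, one_mul, hPQ]
  · rintro p' ⟨c', hc', h'⟩
    rw [fact_iff n hn w c' p'] at h'
    have hcoef : ∀ m : ℕ, (Paux n p').coeff m = 2 * c' * Q.coeff m := by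
      intro m
      rw [h', coeff_C_mul]
    have hc2 : 2 * c' = 1 := by
      have h4 := hcoef (2 * n)
      rw [Paux_coeff_top n hn p', htop, mul_one] at h4
      exact h4.symm
    have hP' : Paux n p' = Paux n p₀ := by
      rw [h', hc2, map_one, one_mul, hPQ]
    have e1 : p'.1 = p₀.1 := by
      have h3 := congrArg (fun P => Polynomial.coeff P n) hP'
      rw [Paux_coeff_n n hn p', Paux_coeff_n n hn p₀] at h3
      have : (p'.1 : ℂ) = (p₀.1 : ℂ) := by linear_combination h3 / 2
      exact_mod_cast this
    have key2 : ∀ k : Fin (n - 1), p'.2.1 k = p₀.2.1 k ∧ p'.2.2 k = p₀.2.2 k := by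
      intro k
      have h3 := congrArg (fun P => Polynomial.coeff P (n + ((k : ℕ) + 1))) hP'
      rw [Paux_coeff_upper n hn p' k, Paux_coeff_upper n hn p₀ k] at h3
      rw [Complex.ext_iff] at h3
      obtain ⟨hre, him⟩ := h3
      simp [Complex.sub_re, Complex.sub_im, Complex.mul_re, Complex.mul_im] at hre him
      refine ⟨?_, ?_⟩ <;> simp only [hp₀] <;> linarith
    exact Prod.ext e1 (Prod.ext (funext fun k => (key2 k).1) (funext fun k => (key2 k).2))
end
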